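/- arXiv:1007.3034 — 7 statements merged into one kernel-verified Lean document; each statement's English description precedes it below -/
import Mathlib

section
/- Let d ≥ 2 and N ≥ 2 be integers and let v_1, …, v_N ∈ ℝ^d. Let α be a real number with 0 < α < sin(√π · Γ((d−1)/2) / (N(N−1) · Γ(d/2))). Then there exists a unit vector e ∈ ℝ^d such that for all j, k ∈ {1, …, N} one has |⟨v_j − v_k, e⟩| ≥ α · ‖v_j − v_k‖. -/
/-!
Write `α = sin β`. A unit vector `e` fails for the pair `(j, k)` when it lies in the cone
`|⟪w, x⟫| < sin β ‖w‖ ‖x‖`, `w = v j - v k`, around the hyperplane orthogonal to `w`. After a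
reflection taking `w` to the first coordinate axis, slice the part of this cone inside the unit
ball of `ℝ^d` along that axis: over `y ∈ ℝ^{d-1}` lies an interval of length
`2 min (tan β ‖y‖, √(1 - ‖y‖²))`. Integrating in polar coordinates, the cone has volume
`(d - 1) ω_{d-1} · (1 / d) ∫_{-β}^{β} cos^{d-2} θ dθ ≤ 2 β (d - 1) ω_{d-1} / d`, where `ω_n` is the
volume of the unit ball of `ℝ^n`. As `d ω_d / ((d - 1) ω_{d-1}) = √π Γ((d - 1) / 2) / Γ(d / 2)`,
the hypothesis on `α` says exactly that the `N (N - 1) / 2` cones have total volume less than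
`ω_d`, so some nonzero point of the ball lies in none of them; its direction is the required `e`.
-/

open Real MeasureTheory Set Metric

theorem sin_mul_cos_pow_add_integral_le (k : ℕ) {b : ℝ} (hb0 : 0 ≤ b) (hb : b ≤ π / 2) :
    sin b * cos b ^ (k + 1) + (k + 2) * ∫ r in cos b..1, r ^ k * √(1 - r ^ 2) ≤ b := by
  set f : ℝ → ℝ := fun r => r ^ k * √(1 - r ^ 2)
  have hf : Continuous f := by fun_prop
  -- `G` vanishes at `0` and has derivative `1 - cos x ^ k ≥ 0` on `[0, π / 2]`.
  set G : ℝ → ℝ := fun x => x - sin x * cos x ^ (k + 1) - (k + 2) * ∫ r in cos x..1, f r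
  have hG : ∀ x, HasDerivAt G (1 - (cos x * cos x ^ (k + 1)
      + sin x * ((k + 1) * cos x ^ k * -sin x)) - (k + 2) * (-f (cos x) * -sin x)) x := by
    intro x
    have hI := (intervalIntegral.integral_hasDerivAt_left (hf.intervalIntegrable _ 1)
      (hf.stronglyMeasurableAtFilter _ _) hf.continuousAt).comp x (hasDerivAt_cos x)
    have hP := (hasDerivAt_sin x).mul ((hasDerivAt_cos x).pow (k + 1))
    push_cast at hP
    exact ((hasDerivAt_id x).sub hP).sub (hI.const_mul _)
  have hmono : MonotoneOn G (Icc 0 b) := by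
    refine monotoneOn_of_deriv_nonneg (convex_Icc 0 b)
      (fun x _ => (hG x).continuousAt.continuousWithinAt)
      (fun x _ => (hG x).differentiableAt.differentiableWithinAt) fun x hx => ?_
    rw [interior_Icc] at hx
    have hsin : 0 ≤ sin x := sin_nonneg_of_nonneg_of_le_pi hx.1.le (by linarith [hx.2, pi_pos])
    have hcos : 0 ≤ cos x := cos_nonneg_of_mem_Icc ⟨by linarith [hx.1, pi_pos], by linarith [hx.2]⟩
    have hsqrt : √(1 - cos x ^ 2) = sin x := by
      rw [← sin_sq, sqrt_sq hsin]
    rw [(hG x).deriv]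
    simp only [f, hsqrt]
    have hderiv : 1 - (cos x * cos x ^ (k + 1) + sin x * ((k + 1) * cos x ^ k * -sin x))
        - (k + 2) * (-(cos x ^ k * sin x) * -sin x) = 1 - cos x ^ k := by
      linear_combination (-cos x ^ k) * sin_sq_add_cos_sq x
    rw [hderiv, sub_nonneg]
    exact pow_le_one₀ hcos (cos_le_one x)
  have := hmono ⟨le_rfl, hb0⟩ ⟨hb0, le_rfl⟩ hb0
  simp only [G, sin_zero, cos_zero, one_pow, mul_one, sub_self, intervalIntegral.integral_same,
    mul_zero, sub_nonneg] at this
  linarith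

theorem arcsin_lt_of_lt_sin {x c : ℝ} (hc : 0 ≤ c) (h : x < sin c) : arcsin x < c := by
  rcases le_or_gt c (π / 2) with hc' | hc'
  · exact (arcsin_lt_iff_lt_sin' ⟨by linarith [pi_pos], hc'⟩).2 h
  · exact (arcsin_le_pi_div_two x).trans_lt hc'

theorem tan_mul_le_sqrt_one_sub_sq {β r : ℝ} (hβ : cos β ≠ 0) (hr : 0 ≤ r) (hrβ : r ≤ cos β) :
    tan β * r ≤ √(1 - r ^ 2) := by
  rw [tan_eq_sin_div_cos]
  apply le_sqrt_of_sq_le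
  rw [div_mul_eq_mul_div, div_pow, div_le_iff₀ (by positivity)]
  nlinarith [sin_sq_add_cos_sq β, mul_le_mul hrβ hrβ hr (hr.trans hrβ)]

theorem sqrt_one_sub_sq_le_tan_mul {β r : ℝ} (hβ : 0 < cos β) (hsin : 0 ≤ sin β)
    (hrβ : cos β ≤ r) : √(1 - r ^ 2) ≤ tan β * r := by
  have hr := hβ.trans_le hrβ
  rw [tan_eq_sin_div_cos, sqrt_le_left (by positivity), div_mul_eq_mul_div, div_pow,
    le_div_iff₀ (by positivity)]
  nlinarith [sin_sq_add_cos_sq β, mul_le_mul hrβ hrβ hβ.le hr.le]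

theorem min_tan_mul_sqrt_one_sub_sq_eq_zero {β r : ℝ} (htan : 0 ≤ tan β) (hr : 1 < r) :
    min (tan β * r) √(1 - r ^ 2) = 0 := by
  rw [sqrt_eq_zero'.2 (by nlinarith), min_eq_right (by positivity)]

theorem integral_Ioi_pow_mul_min_le (k : ℕ) {β : ℝ} (hβ0 : 0 ≤ β) (hβ : β < π / 2) :
    ∫ r in Ioi 0, r ^ k * min (tan β * r) √(1 - r ^ 2) ≤ β / (k + 2) := by
  set g : ℝ → ℝ := fun r => r ^ k * min (tan β * r) √(1 - r ^ 2)
  have hcos : 0 < cos β := cos_pos_of_mem_Ioo ⟨by linarith [pi_pos], hβ⟩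
  have hsin : 0 ≤ sin β := sin_nonneg_of_nonneg_of_le_pi hβ0 (by linarith [pi_pos])
  have htan : 0 ≤ tan β := tan_nonneg_of_nonneg_of_le_pi_div_two hβ0 hβ.le
  have hg : Continuous g := by fun_prop
  have hg_one : ∀ r ∈ Ioi 0 \ Ioc 0 1, g r = 0 := by
    rintro r ⟨hr0, hr1⟩
    simp only [g, min_tan_mul_sqrt_one_sub_sq_eq_zero htan (not_le.1 fun h => hr1 ⟨hr0, h⟩),
      mul_zero]
  have hfirst : ∫ r in 0..cos β, g r = tan β * (cos β ^ (k + 2) / (k + 2)) := by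
    rw [intervalIntegral.integral_congr (g := fun r => tan β * r ^ (k + 1)),
      intervalIntegral.integral_const_mul, integral_pow]
    · push_cast
      ring
    intro r hr
    rw [uIcc_of_le hcos.le] at hr
    simp only [g, min_eq_left (tan_mul_le_sqrt_one_sub_sq hcos.ne' hr.1 hr.2)]
    ring
  have hsecond : ∫ r in cos β..1, g r = ∫ r in cos β..1, r ^ k * √(1 - r ^ 2) := by
    refine intervalIntegral.integral_congr fun r hr => ?_
    rw [uIcc_of_le (cos_le_one β)] at hr
    simp only [g, min_eq_right (sqrt_one_sub_sq_le_tan_mul hcos hsin hr.1)]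
  have key := sin_mul_cos_pow_add_integral_le k hβ0 (by linarith)
  calc ∫ r in Ioi 0, g r = ∫ r in 0..1, g r := by
        rw [setIntegral_eq_of_subset_of_forall_sdiff_eq_zero measurableSet_Ioi
          Ioc_subset_Ioi_self hg_one, intervalIntegral.integral_of_le zero_le_one]
    _ = (sin β * cos β ^ (k + 1) + (k + 2) * ∫ r in cos β..1, r ^ k * √(1 - r ^ 2)) / (k + 2) := by
        rw [← intervalIntegral.integral_add_adjacent_intervals (hg.intervalIntegrable 0 (cos β))
          (hg.intervalIntegrable _ 1), hfirst, hsecond, tan_eq_sin_div_cos]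
        field_simp
        ring
    _ ≤ β / (k + 2) := by gcongr

theorem measurePreserving_euclideanSpace_head_tail (n : ℕ) :
    MeasurePreserving (fun x : EuclideanSpace ℝ (Fin (n + 1)) =>
      (x 0, (WithLp.toLp 2 fun i : Fin n => x i.succ : EuclideanSpace ℝ (Fin n)))) :=
  (((MeasurePreserving.id volume).prod
    (EuclideanSpace.volume_preserving_symm_measurableEquiv_toLp (Fin n)).symm).comp
    (volume_preserving_piFinSuccAbove (fun _ : Fin (n + 1) => ℝ) 0)).comp
    (EuclideanSpace.volume_preserving_symm_measurableEquiv_toLp (Fin (n + 1)))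

theorem euclideanSpace_norm_sq_eq_head_tail {n : ℕ} (x : EuclideanSpace ℝ (Fin (n + 1))) :
    ‖x‖ ^ 2 =
      x 0 ^ 2 + ‖(WithLp.toLp 2 fun i : Fin n => x i.succ : EuclideanSpace ℝ (Fin n))‖ ^ 2 := by
  simp [EuclideanSpace.norm_sq_eq, Fin.sum_univ_succ]

theorem abs_lt_sin_mul_iff {β t s ρ : ℝ} (hcos : 0 < cos β) (hsin : 0 ≤ sin β) (hs : 0 ≤ s)
    (hρ : 0 ≤ ρ) (h : ρ ^ 2 = t ^ 2 + s ^ 2) : |t| < sin β * ρ ↔ |t| < tan β * s := by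
  rw [tan_eq_sin_div_cos, div_mul_eq_mul_div, lt_div_iff₀ hcos,
    ← sq_lt_sq₀ (abs_nonneg t) (mul_nonneg hsin hρ),
    ← sq_lt_sq₀ (mul_nonneg (abs_nonneg t) hcos.le) (mul_nonneg hsin hs),
    mul_pow, mul_pow, mul_pow, sq_abs, h]
  have := sin_sq_add_cos_sq β
  constructor <;> intro <;> nlinarith

theorem abs_lt_sqrt_one_sub_sq_iff {t s ρ : ℝ} (hρ : 0 ≤ ρ) (h : ρ ^ 2 = t ^ 2 + s ^ 2) :
    |t| < √(1 - s ^ 2) ↔ ρ < 1 := by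
  rw [lt_sqrt (abs_nonneg t), sq_abs, ← pow_lt_one_iff_of_nonneg hρ two_ne_zero, h]
  constructor <;> intro <;> linarith

theorem volume_prod_abs_fst_lt_comp_norm_snd {F : Type*} [NormedAddCommGroup F]
    [NormedSpace ℝ F] [Nontrivial F] [FiniteDimensional ℝ F] [MeasurableSpace F] [BorelSpace F]
    (μ : Measure F) [μ.IsAddHaarMeasure] {m : ℝ → ℝ} (hm : Continuous m)
    (hm0 : ∀ r, 0 ≤ r → 0 ≤ m r) {R : ℝ} (hmR : ∀ r, R < r → m r = 0) :
    (volume.prod μ) {q : ℝ × F | |q.1| < m ‖q.2‖} = ENNReal.ofReal (2 *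
      (Module.finrank ℝ F * μ.real (ball 0 1) *
        ∫ r in Ioi 0, r ^ (Module.finrank ℝ F - 1) * m r)) := by
  have hsection (y : F) :
      volume ((fun t => (t, y)) ⁻¹' {q : ℝ × F | |q.1| < m ‖q.2‖}) =
        ENNReal.ofReal (2 * m ‖y‖) := by
    rw [← Real.volume_ball 0]
    congr 1
    ext t
    simp [Real.norm_eq_abs]
  have hint : Integrable (fun y : F => 2 * m ‖y‖) μ := by
    refine (by fun_prop : Continuous fun y : F => 2 * m ‖y‖).integrable_of_hasCompactSupport
      (HasCompactSupport.intro (isCompact_closedBall 0 R) fun y hy => ?_)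
    rw [hmR _ (by simpa using hy), mul_zero]
  rw [Measure.prod_apply_symm (measurableSet_lt (by fun_prop) (by fun_prop)),
    lintegral_congr hsection, ← ofReal_integral_eq_lintegral_ofReal hint
      (ae_of_all _ fun y => mul_nonneg zero_le_two (hm0 _ (norm_nonneg y))),
    integral_fun_norm_addHaar μ fun r => 2 * m r]
  simp only [smul_eq_mul, nsmul_eq_mul, mul_left_comm _ (2 : ℝ), integral_const_mul]
  ring_nf

theorem volume_ball_inter_abs_apply_zero_lt_le (k : ℕ) {β : ℝ} (hβ0 : 0 ≤ β) (hβ : β < π / 2) :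
    volume (ball (0 : EuclideanSpace ℝ (Fin (k + 2))) 1 ∩ {x | |x 0| < sin β * ‖x‖}) ≤
      ENNReal.ofReal (2 * β / (k + 2) *
        ((k + 1) * volume.real (ball (0 : EuclideanSpace ℝ (Fin (k + 1))) 1))) := by
  have hcos : 0 < cos β := cos_pos_of_mem_Ioo ⟨by linarith [pi_pos], hβ⟩
  have hsin : 0 ≤ sin β := sin_nonneg_of_nonneg_of_le_pi hβ0 (by linarith [pi_pos])
  have htan : 0 ≤ tan β := tan_nonneg_of_nonneg_of_le_pi_div_two hβ0 hβ.le
  set C : Set (ℝ × EuclideanSpace ℝ (Fin (k + 1))) :=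
    {q | |q.1| < min (tan β * ‖q.2‖) √(1 - ‖q.2‖ ^ 2)}
  have hpre : ball 0 1 ∩ {x | |x 0| < sin β * ‖x‖} =
      (fun x : EuclideanSpace ℝ (Fin (k + 2)) =>
        (x 0, (WithLp.toLp 2 fun i => x i.succ : EuclideanSpace ℝ (Fin (k + 1))))) ⁻¹' C := by
    ext x
    have h := euclideanSpace_norm_sq_eq_head_tail x
    simp only [mem_inter_iff, mem_ball_zero_iff, mem_ofPred_eq, mem_preimage, C, lt_min_iff,
      abs_lt_sin_mul_iff hcos hsin (norm_nonneg _) (norm_nonneg _) h,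
      abs_lt_sqrt_one_sub_sq_iff (norm_nonneg _) h]
    exact and_comm
  rw [hpre, (measurePreserving_euclideanSpace_head_tail (k + 1)).measure_preimage
      (measurableSet_lt (by fun_prop) (by fun_prop)).nullMeasurableSet,
    Measure.volume_eq_prod, volume_prod_abs_fst_lt_comp_norm_snd volume (by fun_prop)
      (fun r hr => le_min (by positivity) (sqrt_nonneg _))
      (fun r hr => min_tan_mul_sqrt_one_sub_sq_eq_zero htan hr)]
  refine ENNReal.ofReal_le_ofReal ?_
  simp only [finrank_euclideanSpace_fin, add_tsub_cancel_right]
  have hV : 0 ≤ volume.real (ball (0 : EuclideanSpace ℝ (Fin (k + 1))) 1) := measureReal_nonneg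
  have := mul_le_mul_of_nonneg_left (integral_Ioi_pow_mul_min_le k hβ0 hβ)
    (by positivity : 0 ≤ 2 * ((k + 1) * volume.real (ball (0 : EuclideanSpace ℝ (Fin (k + 1))) 1)))
  push_cast
  linear_combination this

theorem volume_ball_inter_abs_inner_lt_le (k : ℕ) {β : ℝ} (hβ0 : 0 ≤ β) (hβ : β < π / 2)
    (w : EuclideanSpace ℝ (Fin (k + 2))) :
    volume (ball 0 1 ∩ {x | |inner ℝ w x| < sin β * (‖w‖ * ‖x‖)}) ≤
      ENNReal.ofReal (2 * β / (k + 2) *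
        ((k + 1) * volume.real (ball (0 : EuclideanSpace ℝ (Fin (k + 1))) 1))) := by
  rcases eq_or_ne w 0 with rfl | hw
  · simp
  set R := Submodule.reflection (ℝ ∙ (w - ‖w‖ • EuclideanSpace.single 0 1))ᗮ
  have hRw : R w = ‖w‖ • EuclideanSpace.single 0 1 := Submodule.reflection_sub (by simp [norm_smul])
  have hpre : ball 0 1 ∩ {x | |inner ℝ w x| < sin β * (‖w‖ * ‖x‖)} =
      R ⁻¹' (ball 0 1 ∩ {y | |y 0| < sin β * ‖y‖}) := by
    ext x
    have hinner : inner ℝ w x = ‖w‖ * R x 0 := by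
      rw [← R.inner_map_map, hRw, real_inner_smul_left, EuclideanSpace.inner_single_left]
      simp
    simp [hinner, abs_mul, mul_left_comm (sin β), hw]
  rw [hpre, R.measurePreserving.measure_preimage
    (measurableSet_ball.inter (measurableSet_lt (by fun_prop) (by fun_prop))).nullMeasurableSet]
  exact volume_ball_inter_abs_apply_zero_lt_le k hβ0 hβ

theorem natCast_mul_volume_real_ball_euclideanSpace {n : ℕ} (hn : n ≠ 0) :
    n * volume.real (ball (0 : EuclideanSpace ℝ (Fin n)) 1) = 2 * √π ^ n / Gamma (n / 2) := by
  have : NeZero n := ⟨hn⟩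
  have hΓ : 0 < Gamma (n / 2) := Gamma_pos_of_pos (by positivity)
  rw [measureReal_def, EuclideanSpace.volume_ball, Fintype.card_fin, ENNReal.ofReal_one, one_pow,
    one_mul, ENNReal.toReal_ofReal (by positivity), Gamma_add_one (by positivity)]
  field_simp

theorem exists_mem_ne_forall_notMem_of_sum_measure_lt {α ι : Type*} [MeasurableSpace α]
    {μ : Measure α} [NullSingletonClass μ] {S : Set α} (a : α) (s : Finset ι) (B : ι → Set α)
    (h : ∑ i ∈ s, μ (S ∩ B i) < μ S) : ∃ x ∈ S, x ≠ a ∧ ∀ i ∈ s, x ∉ B i := by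
  by_contra! hcover
  refine (h.trans_le' ?_).false
  calc μ S ≤ μ ({a} ∪ ⋃ i ∈ s, S ∩ B i) := measure_mono fun x hx => by
        by_cases hxa : x = a
        · exact Or.inl hxa
        · obtain ⟨i, hi, hxi⟩ := hcover x hx hxa
          exact Or.inr (mem_biUnion hi ⟨hx, hxi⟩)
    _ ≤ μ {a} + μ (⋃ i ∈ s, S ∩ B i) := measure_union_le _ _
    _ ≤ ∑ i ∈ s, μ (S ∩ B i) := by
        rw [measure_singleton, zero_add]
        exact measure_biUnion_finset_le _ _

theorem choose_two_mul_cone_bound_lt_volume_real_ball {k N : ℕ} (hN : 2 ≤ N) {β : ℝ}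
    (hβ : β < √π * Gamma ((k + 1) / 2) / (N * (N - 1) * Gamma ((k + 2) / 2))) :
    (N.choose 2 : ℝ) * (2 * β / (k + 2) *
        ((k + 1) * volume.real (ball (0 : EuclideanSpace ℝ (Fin (k + 1))) 1))) <
      volume.real (ball (0 : EuclideanSpace ℝ (Fin (k + 2))) 1) := by
  have hN' : (2 : ℝ) ≤ N := by exact_mod_cast hN
  have hΓ₁ : 0 < Gamma ((k + 1) / 2) := Gamma_pos_of_pos (by positivity)
  have hΓ₂ : 0 < Gamma ((k + 2) / 2) := Gamma_pos_of_pos (by positivity)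
  have hsurf₁ := natCast_mul_volume_real_ball_euclideanSpace (n := k + 1) (by omega)
  have hsurf₂ := natCast_mul_volume_real_ball_euclideanSpace (n := k + 2) (by omega)
  push_cast at hsurf₁ hsurf₂
  have hV₂ : volume.real (ball (0 : EuclideanSpace ℝ (Fin (k + 2))) 1) =
      2 * √π ^ (k + 2) / (Gamma ((k + 2) / 2) * (k + 2)) := by
    rw [eq_div_iff (by positivity)]
    rw [eq_div_iff hΓ₂.ne'] at hsurf₂
    linear_combination hsurf₂
  rw [lt_div_iff₀ (mul_pos (by nlinarith) hΓ₂)] at hβ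
  have hP : 0 < 2 * √π ^ (k + 1) / ((k + 2) * Gamma ((k + 1) / 2) * Gamma ((k + 2) / 2)) :=
    div_pos (by positivity) (mul_pos (mul_pos (by positivity) hΓ₁) hΓ₂)
  rw [Nat.cast_choose_two, hsurf₁, hV₂, pow_succ √π (k + 1)]
  generalize Gamma ((k + 1) / 2) = Γ₁ at *
  generalize Gamma ((k + 2) / 2) = Γ₂ at *
  refine ((mul_lt_mul_of_pos_right hβ hP).trans_eq' ?_).trans_eq ?_ <;> field_simp

theorem exists_ne_zero_forall_sin_mul_le_abs_inner (k : ℕ) {N : ℕ}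
    (v : Fin N → EuclideanSpace ℝ (Fin (k + 2))) {β : ℝ} (hβ0 : 0 ≤ β) (hβ : β < π / 2)
    (hvol : (N.choose 2 : ℝ) * (2 * β / (k + 2) *
        ((k + 1) * volume.real (ball (0 : EuclideanSpace ℝ (Fin (k + 1))) 1))) <
      volume.real (ball (0 : EuclideanSpace ℝ (Fin (k + 2))) 1)) :
    ∃ x ≠ 0, ∀ i j, i < j → sin β * (‖v i - v j‖ * ‖x‖) ≤ |inner ℝ (v i - v j) x| := by
  set T : Finset (Fin N × Fin N) := {p | p.1 < p.2}
  rw [← Fintype.card_fin N, ← Fintype.card_product_filter_lt] at hvol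
  obtain ⟨x, -, hx0, hx⟩ := exists_mem_ne_forall_notMem_of_sum_measure_lt (μ := volume)
    (S := ball 0 1) 0 T
    (fun p => {x | |inner ℝ (v p.1 - v p.2) x| < sin β * (‖v p.1 - v p.2‖ * ‖x‖)}) <| by
      calc _ ≤ T.card • ENNReal.ofReal (2 * β / (k + 2) *
            ((k + 1) * volume.real (ball (0 : EuclideanSpace ℝ (Fin (k + 1))) 1))) :=
          Finset.sum_le_card_nsmul _ _ _ fun p _ => volume_ball_inter_abs_inner_lt_le k hβ0 hβ _
        _ < _ := by
          rw [← ofReal_measureReal measure_ball_lt_top.ne, nsmul_eq_mul, ← ENNReal.ofReal_natCast,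
            ← ENNReal.ofReal_mul (Nat.cast_nonneg _)]
          exact (ENNReal.ofReal_lt_ofReal_iff
            (ENNReal.toReal_pos (measure_ball_pos _ _ one_pos).ne' measure_ball_lt_top.ne)).2 hvol
  exact ⟨x, hx0, fun i j hij => not_lt.1 (hx (i, j) (by simpa [T] using hij))⟩

theorem exists_norm_eq_one_forall_abs_inner_sub_ge {E : Type*} [NormedAddCommGroup E]
    [InnerProductSpace ℝ E] {N : ℕ} (v : Fin N → E) (α : ℝ) {x : E} (hx0 : x ≠ 0)
    (hx : ∀ i j, i < j → α * (‖v i - v j‖ * ‖x‖) ≤ |inner ℝ (v i - v j) x|) :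
    ∃ e : E, ‖e‖ = 1 ∧ ∀ i j, |inner ℝ (v i - v j) e| ≥ α * ‖v i - v j‖ := by
  have hlt (i j : Fin N) (hij : i < j) : α * ‖v i - v j‖ ≤ |inner ℝ (v i - v j) (‖x‖⁻¹ • x)| := by
    rw [real_inner_smul_right, abs_mul, abs_inv, abs_norm, ← div_eq_inv_mul,
      le_div_iff₀ (norm_pos_iff.2 hx0), mul_assoc]
    exact hx i j hij
  refine ⟨‖x‖⁻¹ • x, norm_smul_inv_norm hx0, fun i j => ?_⟩
  rcases lt_trichotomy i j with h | rfl | h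
  · exact hlt i j h
  · simp
  · rw [ge_iff_le, ← neg_sub, inner_neg_left, abs_neg, norm_neg]
    exact hlt j i h

theorem direction_selection
    (d N : ℕ) (hd : 2 ≤ d) (hN : 2 ≤ N)
    (v : Fin N → EuclideanSpace ℝ (Fin d))
    (α : ℝ) (hα0 : 0 < α)
    (hα : α < Real.sin (Real.sqrt Real.pi * Real.Gamma (((d : ℝ) - 1) / 2) /
        ((N : ℝ) * ((N : ℝ) - 1) * Real.Gamma ((d : ℝ) / 2)))) :
    ∃ e : EuclideanSpace ℝ (Fin d), ‖e‖ = 1 ∧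
      ∀ j k : Fin N, |(inner ℝ (v j - v k) e : ℝ)| ≥ α * ‖v j - v k‖ := by
  obtain ⟨k, rfl⟩ : ∃ k, d = k + 2 := ⟨d - 2, by omega⟩
  rw [show ((k + 2 : ℕ) : ℝ) - 1 = k + 1 by push_cast; ring] at hα
  push_cast at hα
  have hα1 : α < 1 := hα.trans_le (sin_le_one _)
  have hN1 : (1 : ℝ) ≤ N - 1 := by
    rw [le_sub_iff_add_le]
    exact_mod_cast hN
  obtain ⟨x, hx0, hx⟩ := exists_ne_zero_forall_sin_mul_le_abs_inner k v
    (arcsin_nonneg.2 hα0.le) (arcsin_lt_pi_div_two.2 hα1)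
    (choose_two_mul_cone_bound_lt_volume_real_ball hN (arcsin_lt_of_lt_sin (by positivity) hα))
  rw [sin_arcsin (by linarith) hα1.le] at hx
  exact exists_norm_eq_one_forall_abs_inner_sub_ge v α hx0 hx
end

section
/- Let d ≥ 2 and M ≥ 1 be integers and let u_1, …, u_M ∈ ℝ^d be unit vectors. Let α ∈ (0, 1) satisfy arcsin(α) < √π · Γ((d−1)/2) / (2M · Γ(d/2)). Then there exists a unit vector w ∈ ℝ^d such that |⟨u_i, w⟩| > α for every i ∈ {1, …, M}. -/
/-!
The band `{w : |⟪u, w⟫| ≤ α}` of the sphere is measured through the cone it spans in the unit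
ball, `C = {x : ‖x‖ ≤ 1 ∧ |⟪u, x⟫| ≤ α ‖x‖}`. Slicing `C` orthogonally to `u`, the slice at
height `t` is the annulus of radii `|t| √(1 - α²) / α` and `√(1 - t²)` in `uᗮ`, so that
`vol C = ω_{d-1} ∫_{-α}^{α} (√(1 - t²)^{d-1} - (|t| √(1 - α²) / α)^{d-1}) dt`, where `ωₖ` is
the volume of the unit ball of `ℝᵏ`. Comparing the integrand with the derivative of an explicit
antiderivative bounds this by
`2 (d - 1) / d · arcsin α · ω_{d-1} = 2 arcsin α Γ(d/2) / (√π Γ((d-1)/2)) · ω_d`.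
The hypothesis on `α` then says that `M` such cones cannot cover the unit ball, and any nonzero
point of the ball outside all of them, normalised, is the required direction.
-/

open Real MeasureTheory Metric Set Module

theorem hasDerivAt_arcsin_add_mul_sqrt_one_sub_sq_pow (n : ℕ) {t : ℝ}
    (ht : t ∈ Ioo (-1 : ℝ) 1) :
    HasDerivAt (fun t => (n + 1) * arcsin t + t * √(1 - t ^ 2) ^ (n + 1))
      ((n + 1) / √(1 - t ^ 2) + √(1 - t ^ 2) ^ (n + 1) -
        (n + 1) * t ^ 2 * √(1 - t ^ 2) ^ n / √(1 - t ^ 2)) t := by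
  have hpos : 0 < 1 - t ^ 2 := by nlinarith [ht.1, ht.2]
  have hsqrt : HasDerivAt (fun t => √(1 - t ^ 2)) (-(2 * t) / (2 * √(1 - t ^ 2))) t := by
    simpa using ((hasDerivAt_pow 2 t).const_sub 1).sqrt hpos.ne'
  refine (((hasDerivAt_arcsin ht.1.ne' ht.2.ne).const_mul ((n : ℝ) + 1)).fun_add
    ((hasDerivAt_id' t).fun_mul (hsqrt.fun_pow (n + 1)))).congr_deriv ?_
  have : √(1 - t ^ 2) ≠ 0 := (sqrt_pos.2 hpos).ne'
  field_simp
  push_cast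
  ring

theorem integral_sqrt_one_sub_sq_pow_le (n : ℕ) {α : ℝ} (hα0 : 0 ≤ α) (hα1 : α < 1) :
    ∫ t in 0..α, √(1 - t ^ 2) ^ (n + 1) ≤
      ((n + 1) * arcsin α + α * √(1 - α ^ 2) ^ (n + 1)) / (n + 2) := by
  have hG := intervalIntegral.integral_le_sub_of_hasDeriv_right_of_le hα0
    (g := fun t => ((n + 1) * arcsin t + t * √(1 - t ^ 2) ^ (n + 1)) / (n + 2))
    (by fun_prop)
    (fun t ht => ((hasDerivAt_arcsin_add_mul_sqrt_one_sub_sq_pow n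
      ⟨by linarith [ht.1], by linarith [ht.2]⟩).div_const _).hasDerivWithinAt)
    (by fun_prop : Continuous fun t : ℝ => √(1 - t ^ 2) ^ (n + 1)).integrableOn_Icc
    (fun t ht => ?_)
  · simpa using hG
  have hpos : 0 < 1 - t ^ 2 := by nlinarith [ht.1, ht.2]
  set s := √(1 - t ^ 2)
  have hs0 : 0 < s := sqrt_pos.2 hpos
  have hs1 : s ≤ 1 := sqrt_le_one.2 (by nlinarith)
  have hss : s ^ 2 = 1 - t ^ 2 := sq_sqrt hpos.le
  -- the derivative exceeds `s ^ (n + 1)` by a multiple of `1 - s ^ n (s ^ 2 + t ^ 2) = 1 - s ^ n`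
  have hsn : 0 ≤ 1 - s ^ n := sub_nonneg.2 (pow_le_one₀ hs0.le hs1)
  calc s ^ (n + 1) ≤ s ^ (n + 1) + (n + 1) * (1 - s ^ n) / (s * (n + 2)) :=
        le_add_of_nonneg_right (by positivity)
    _ = _ := by
        rw [show t ^ 2 = 1 - s ^ 2 by linarith]
        field_simp
        ring

theorem intervalIntegral.integral_neg_self_eq_two_mul_of_even {f : ℝ → ℝ}
    (hf : ∀ x, f (-x) = f x) (hcont : Continuous f) (a : ℝ) :
    ∫ x in -a..a, f x = 2 * ∫ x in 0..a, f x := by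
  have hneg : ∫ x in -a..0, f x = ∫ x in 0..a, f x := by
    simpa [hf] using (intervalIntegral.integral_comp_neg (a := 0) (b := a) f).symm
  rw [← intervalIntegral.integral_add_adjacent_intervals (hcont.intervalIntegrable _ _)
    (hcont.intervalIntegrable _ _), hneg, two_mul]

theorem integral_sqrt_one_sub_sq_pow_sub_abs_mul_pow_le (n : ℕ) {α : ℝ} (hα0 : 0 < α)
    (hα1 : α < 1) :
    ∫ t in -α..α, (√(1 - t ^ 2) ^ (n + 1) - (|t| * (√(1 - α ^ 2) / α)) ^ (n + 1)) ≤
      2 * (n + 1) / (n + 2) * arcsin α := by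
  set c := √(1 - α ^ 2) / α
  rw [intervalIntegral.integral_neg_self_eq_two_mul_of_even (fun t => by simp) (by fun_prop)]
  have hcone : ∫ t in 0..α, (|t| * c) ^ (n + 1) = α * √(1 - α ^ 2) ^ (n + 1) / (n + 2) := by
    rw [intervalIntegral.integral_congr (g := fun t => c ^ (n + 1) * t ^ (n + 1)) fun t ht => by
      rw [uIcc_of_le hα0.le] at ht; simp [abs_of_nonneg ht.1, mul_pow, mul_comm]]
    rw [intervalIntegral.integral_const_mul, integral_pow]
    simp only [c, div_pow]
    field_simp
    push_cast
    ring
  rw [intervalIntegral.integral_sub (Continuous.intervalIntegrable (by fun_prop) _ _)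
    (Continuous.intervalIntegrable (by fun_prop) _ _), hcone]
  have := integral_sqrt_one_sub_sq_pow_le n hα0.le hα1
  rw [add_div] at this
  rw [show 2 * (n + 1) / (n + 2) * arcsin α = 2 * ((n + 1) * arcsin α / (n + 2)) by ring]
  linarith

/- With `ωₘ = √π ^ m / Γ(m / 2 + 1)` the volume of the unit ball of `ℝᵐ` and `σₘ = (m + 1) ωₘ₊₁`
the area of the unit sphere of `ℝᵐ⁺¹`, this reads `2 (n + 1) / (n + 2) · ωₙ₊₁ = 2 σₙ / σₙ₊₁ · ωₙ₊₂`. -/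
theorem sqrt_pi_pow_div_Gamma_mul_eq (n : ℕ) :
    √π ^ (n + 1) / Gamma ((n + 1) / 2 + 1) * (2 * (n + 1) / (n + 2)) =
      2 * Gamma ((n + 2) / 2) / (√π * Gamma ((n + 1) / 2)) *
        (√π ^ (n + 2) / Gamma ((n + 2) / 2 + 1)) := by
  have h1 : 0 < Gamma ((n + 1) / 2) := Gamma_pos_of_pos (by positivity)
  have h2 : 0 < Gamma ((n + 2) / 2) := Gamma_pos_of_pos (by positivity)
  have hπ : 0 < √π := sqrt_pos.2 pi_pos
  rw [Gamma_add_one (by positivity), Gamma_add_one (by positivity)]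
  field_simp
  ring

theorem MeasureTheory.Measure.addHaar_closedBall_diff_ball {F : Type*} [NormedAddCommGroup F]
    [NormedSpace ℝ F] [MeasurableSpace F] [BorelSpace F] [FiniteDimensional ℝ F] [Nontrivial F]
    (μ : Measure F) [μ.IsAddHaarMeasure] (x : F) {r R : ℝ} (hr : 0 ≤ r) (hrR : r ≤ R) :
    μ (closedBall x R \ ball x r) =
      ENNReal.ofReal (R ^ finrank ℝ F - r ^ finrank ℝ F) * μ (ball 0 1) := by
  rw [measure_sdiff (ball_subset_closedBall.trans (closedBall_subset_closedBall hrR))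
    measurableSet_ball.nullMeasurableSet measure_ball_lt_top.ne,
    μ.addHaar_closedBall x (hr.trans hrR), μ.addHaar_ball x hr,
    ← ENNReal.sub_mul fun _ _ => measure_ball_lt_top.ne, ENNReal.ofReal_sub _ (by positivity)]

theorem abs_mul_sqrt_one_sub_sq_div_le_sqrt {α t : ℝ} (hα0 : 0 < α) (hα1 : α < 1)
    (ht : |t| ≤ α) : |t| * (√(1 - α ^ 2) / α) ≤ √(1 - t ^ 2) := by
  have ht2 : t ^ 2 ≤ α ^ 2 := by rw [← sq_abs]; gcongr
  rw [le_sqrt (by positivity) (by nlinarith), mul_pow, div_pow, sq_abs, sq_sqrt (by nlinarith),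
    ← mul_div_assoc, div_le_iff₀ (by positivity)]
  nlinarith

section BandCone

variable {F : Type*} [NormedAddCommGroup F] [NormedSpace ℝ F] [MeasurableSpace F] [BorelSpace F]
  [FiniteDimensional ℝ F] [Nontrivial F] (μ : Measure F) [μ.IsAddHaarMeasure] {α : ℝ}

theorem addHaar_slice_bandCone_le (hα0 : 0 < α) (hα1 : α < 1) (t : ℝ) :
    μ {z : F | t ^ 2 + ‖z‖ ^ 2 ≤ 1 ∧ t ^ 2 ≤ α ^ 2 * (t ^ 2 + ‖z‖ ^ 2)} ≤
      (Icc (-α) α).indicator (fun t => ENNReal.ofReal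
        (√(1 - t ^ 2) ^ finrank ℝ F - (|t| * (√(1 - α ^ 2) / α)) ^ finrank ℝ F) *
          μ (ball 0 1)) t := by
  by_cases ht : t ∈ Icc (-α) α
  · rw [indicator_of_mem ht, ← μ.addHaar_closedBall_diff_ball 0 (by positivity)
      (abs_mul_sqrt_one_sub_sq_div_le_sqrt hα0 hα1 (abs_le.2 ht))]
    refine measure_mono fun z ⟨hz1, hz2⟩ => ⟨?_, ?_⟩
    · rw [mem_closedBall_zero_iff]
      exact le_sqrt_of_sq_le (by linarith)
    · rw [mem_ball_zero_iff, not_lt, ← pow_le_pow_iff_left₀ (by positivity) (norm_nonneg z)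
        two_ne_zero, mul_pow, div_pow, sq_abs, sq_sqrt (by nlinarith), ← mul_div_assoc,
        div_le_iff₀ (by positivity)]
      linarith
  · have hempty : {z : F | t ^ 2 + ‖z‖ ^ 2 ≤ 1 ∧ t ^ 2 ≤ α ^ 2 * (t ^ 2 + ‖z‖ ^ 2)} = ∅ :=
      eq_empty_of_forall_notMem fun z ⟨hz1, hz2⟩ =>
        ht (abs_le.1 (abs_le_of_sq_le_sq (by nlinarith) hα0.le))
    simp [hempty]

theorem volume_prod_bandCone_le (hα0 : 0 < α) (hα1 : α < 1) :
    (volume.prod μ) {p : ℝ × F | p.1 ^ 2 + ‖p.2‖ ^ 2 ≤ 1 ∧ p.1 ^ 2 ≤ α ^ 2 * (p.1 ^ 2 + ‖p.2‖ ^ 2)} ≤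
      ENNReal.ofReal (∫ t in -α..α,
        (√(1 - t ^ 2) ^ finrank ℝ F - (|t| * (√(1 - α ^ 2) / α)) ^ finrank ℝ F)) *
          μ (ball 0 1) := by
  set g : ℝ → ℝ := fun t => √(1 - t ^ 2) ^ finrank ℝ F - (|t| * (√(1 - α ^ 2) / α)) ^ finrank ℝ F
  have hg : 0 ≤ᵐ[volume.restrict (Icc (-α) α)] g := by
    refine (ae_restrict_iff' measurableSet_Icc).2 (.of_forall fun t ht => ?_)
    exact sub_nonneg.2 (pow_le_pow_left₀ (by positivity)
      (abs_mul_sqrt_one_sub_sq_div_le_sqrt hα0 hα1 (abs_le.2 ht)) _)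
  rw [Measure.prod_apply (by measurability)]
  calc _ ≤ ∫⁻ t, (Icc (-α) α).indicator (fun t => ENNReal.ofReal (g t) * μ (ball 0 1)) t :=
        lintegral_mono fun t => addHaar_slice_bandCone_le μ hα0 hα1 t
    _ = (∫⁻ t in Icc (-α) α, ENNReal.ofReal (g t)) * μ (ball 0 1) := by
        rw [lintegral_indicator measurableSet_Icc, lintegral_mul_const _ (by fun_prop)]
    _ = ENNReal.ofReal (∫ t in -α..α, g t) * μ (ball 0 1) := by
        rw [intervalIntegral.integral_of_le (by linarith), ← integral_Icc_eq_integral_Ioc,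
          ofReal_integral_eq_lintegral_ofReal (Continuous.integrableOn_Icc (by fun_prop)) hg]

end BandCone

theorem norm_sq_eq_inner_sq_add_norm_sq_orthogonalProjection {E : Type*} [NormedAddCommGroup E]
    [InnerProductSpace ℝ E] {u : E} (hu : ‖u‖ = 1) (x : E) :
    ‖x‖ ^ 2 = inner ℝ u x ^ 2 + ‖(ℝ ∙ u)ᗮ.orthogonalProjectionOnto x‖ ^ 2 := by
  rw [(ℝ ∙ u).norm_sq_eq_add_norm_sq_projection x,
    Submodule.coe_norm (x := (ℝ ∙ u).orthogonalProjectionOnto x),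
    ← Submodule.starProjection_apply, Submodule.starProjection_unit_singleton ℝ hu, norm_smul, hu,
    mul_one, norm_eq_abs, sq_abs]

theorem setOf_bandCone_eq_preimage {E : Type*} [NormedAddCommGroup E] [InnerProductSpace ℝ E]
    {u : E} (hu : ‖u‖ = 1) {α : ℝ} (hα : 0 ≤ α) :
    {x : E | ‖x‖ ≤ 1 ∧ |inner ℝ u x| ≤ α * ‖x‖} =
      (fun x => (inner ℝ u x, (ℝ ∙ u)ᗮ.orthogonalProjectionOnto x)) ⁻¹'
        {p : ℝ × (ℝ ∙ u)ᗮ | p.1 ^ 2 + ‖p.2‖ ^ 2 ≤ 1 ∧ p.1 ^ 2 ≤ α ^ 2 * (p.1 ^ 2 + ‖p.2‖ ^ 2)} := by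
  ext x
  simp only [mem_ofPred_eq, mem_preimage,
    ← norm_sq_eq_inner_sq_add_norm_sq_orthogonalProjection hu, sq_le_one_iff₀ (norm_nonneg x),
    ← mul_pow, sq_le_sq, abs_of_nonneg (by positivity : 0 ≤ α * ‖x‖)]

section InnerProductSpace

variable {E : Type*} [NormedAddCommGroup E] [InnerProductSpace ℝ E] [FiniteDimensional ℝ E]
  [MeasurableSpace E] [BorelSpace E] {u : E}

theorem measurePreserving_inner_prod_orthogonalProjection (hu : ‖u‖ = 1) :
    MeasurePreserving
      (fun x => (inner ℝ u x, (ℝ ∙ u)ᗮ.orthogonalProjectionOnto x) : E → ℝ × (ℝ ∙ u)ᗮ) := by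
  have h := ((LinearIsometryEquiv.toSpanUnitSingleton u hu).symm.measurePreserving.prod
    (MeasurePreserving.id volume)).comp
    ((WithLp.volume_preserving_ofLp _ _).comp (ℝ ∙ u).orthogonalDecomposition.measurePreserving)
  convert h using 1
  · ext x
    · simp only [Function.comp_apply, Prod.map_fst, Submodule.orthogonalDecomposition_apply]
      rw [LinearIsometryEquiv.eq_symm_apply]
      ext1
      simp [Submodule.starProjection_unit_singleton ℝ hu]
    · simp
  · exact Measure.volume_eq_prod _ _

theorem volume_bandCone_le (hd : 2 ≤ finrank ℝ E) (hu : ‖u‖ = 1) {α : ℝ} (hα0 : 0 < α)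
    (hα1 : α < 1) :
    volume {x : E | ‖x‖ ≤ 1 ∧ |inner ℝ u x| ≤ α * ‖x‖} ≤
      ENNReal.ofReal (2 * arcsin α * Gamma (finrank ℝ E / 2) /
        (√π * Gamma ((finrank ℝ E - 1) / 2))) * volume (ball (0 : E) 1) := by
  obtain ⟨n, hn⟩ : ∃ n, finrank ℝ E = n + 2 := ⟨finrank ℝ E - 2, by omega⟩
  have : Fact (finrank ℝ E = n + 1 + 1) := ⟨hn⟩
  have hK : finrank ℝ (ℝ ∙ u)ᗮ = n + 1 :=
    Submodule.finrank_orthogonal_span_singleton (norm_ne_zero_iff.1 (hu ▸ one_ne_zero))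
  have : Nontrivial E := Module.nontrivial_of_finrank_pos (R := ℝ) (by omega)
  have : Nontrivial (ℝ ∙ u)ᗮ := Module.nontrivial_of_finrank_pos (R := ℝ) (by omega)
  rw [setOf_bandCone_eq_preimage hu hα0.le,
    (measurePreserving_inner_prod_orthogonalProjection hu).measure_preimage (by measurability)]
  refine (volume_prod_bandCone_le volume hα0 hα1).trans ?_
  rw [hK, InnerProductSpace.volume_ball, InnerProductSpace.volume_ball, hK, hn]
  simp only [ENNReal.ofReal_one, one_pow, one_mul]
  rw [← ENNReal.ofReal_mul' (by positivity), ← ENNReal.ofReal_mul' (by positivity)]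
  refine ENNReal.ofReal_le_ofReal ?_
  calc _ ≤ 2 * (n + 1) / (n + 2) * arcsin α * (√π ^ (n + 1) / Gamma (↑(n + 1) / 2 + 1)) :=
        mul_le_mul_of_nonneg_right (integral_sqrt_one_sub_sq_pow_sub_abs_mul_pow_le n hα0 hα1)
          (by positivity)
    _ = _ := by
        push_cast
        rw [show (n : ℝ) + 2 - 1 = n + 1 by ring]
        linear_combination arcsin α * sqrt_pi_pow_div_Gamma_mul_eq n

theorem volume_iUnion_bandCone_lt {ι : Type*} [Fintype ι] (hd : 2 ≤ finrank ℝ E) {u : ι → E}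
    (hu : ∀ i, ‖u i‖ = 1) {α : ℝ} (hα0 : 0 < α) (hα1 : α < 1)
    (hα : Fintype.card ι * (2 * arcsin α * Gamma (finrank ℝ E / 2) /
      (√π * Gamma ((finrank ℝ E - 1) / 2))) < 1) :
    volume (⋃ i, {x : E | ‖x‖ ≤ 1 ∧ |inner ℝ (u i) x| ≤ α * ‖x‖}) < volume (ball (0 : E) 1) := by
  set ρ := 2 * arcsin α * Gamma (finrank ℝ E / 2) / (√π * Gamma ((finrank ℝ E - 1) / 2))
  calc _ ≤ ∑ i : ι, ENNReal.ofReal ρ * volume (ball (0 : E) 1) :=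
        (measure_iUnion_fintype_le _ _).trans <|
          Finset.sum_le_sum fun i _ => volume_bandCone_le hd (hu i) hα0 hα1
    _ = ENNReal.ofReal (Fintype.card ι * ρ) * volume (ball (0 : E) 1) := by
        rw [Finset.sum_const, nsmul_eq_mul, ← mul_assoc, ENNReal.ofReal_mul (by positivity),
          Finset.card_univ, ENNReal.ofReal_natCast]
    _ < 1 * volume (ball (0 : E) 1) :=
        ENNReal.mul_lt_mul_left (measure_ball_pos _ _ one_pos).ne' measure_ball_lt_top.ne
          (ENNReal.ofReal_lt_one.2 hα)
    _ = _ := one_mul _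

end InnerProductSpace

theorem common_transversal_direction
    (d M : ℕ) (hd : 2 ≤ d) (hM : 1 ≤ M)
    (u : Fin M → EuclideanSpace ℝ (Fin d)) (hu : ∀ i, ‖u i‖ = 1)
    (α : ℝ) (hα0 : 0 < α) (hα1 : α < 1)
    (hα : Real.arcsin α < Real.sqrt Real.pi * Real.Gamma (((d : ℝ) - 1) / 2) /
        (2 * (M : ℝ) * Real.Gamma ((d : ℝ) / 2))) :
    ∃ w : EuclideanSpace ℝ (Fin d), ‖w‖ = 1 ∧ ∀ i : Fin M, |(inner ℝ (u i) w : ℝ)| > α := by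
  have hρ : M * (2 * arcsin α * Gamma (d / 2) / (√π * Gamma ((d - 1) / 2))) < 1 := by
    have : (1 : ℝ) ≤ M := by exact_mod_cast hM
    have : (2 : ℝ) ≤ d := by exact_mod_cast hd
    have : 0 < Gamma ((d - 1) / 2) := Gamma_pos_of_pos (by linarith)
    rw [lt_div_iff₀ (by positivity)] at hα
    rw [← mul_div_assoc, div_lt_one (by positivity)]
    linarith
  obtain ⟨x, hx1, hx2⟩ := not_subset.1 fun h => (measure_mono h).not_gt
    (volume_iUnion_bandCone_lt (by simpa using hd) hu hα0 hα1 (by simpa using hρ))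
  have hx : ∀ i, α * ‖x‖ < |inner ℝ (u i) x| := fun i => by
    simpa [(mem_ball_zero_iff.1 hx1).le] using fun h => hx2 (mem_iUnion.2 ⟨i, h⟩)
  have hx0 : x ≠ 0 := by rintro rfl; simpa using hx ⟨0, hM⟩
  refine ⟨‖x‖⁻¹ • x, norm_smul_inv_norm hx0, fun i => ?_⟩
  rw [real_inner_smul_right, abs_mul, abs_inv, abs_norm, gt_iff_lt,
    lt_inv_mul_iff₀ (norm_pos_iff.2 hx0), mul_comm]
  exact hx i
end

section
/- Let Φ ∈ L²(ℝ^d, ℂ) with Φ ≠ 0 as an element of L², and let (y_n) be a sequence in ℝ^d such that ‖Φ(· − y_n) − Φ‖_{L²} → 0 as n → ∞. Then y_n → 0. -/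
/-!
The translation defect `z ↦ ‖Φ(· - z) - Φ‖_p` is continuous (translation is continuous on `L^p`,
`p < ∞`), and far away it is at least about `‖Φ‖_p`: approximating `Φ` by a compactly supported
`g`, the translates `g(· - z)` and `g` have disjoint supports once `z` is large. It vanishes only
at `0`, since a period `z ≠ 0` would make all the `k • z` periods, and they go to infinity.
A continuous function with a unique zero which stays away from `0` outside a compact set can only
tend to `0` along sequences converging to that zero.
-/

open MeasureTheory Filter Bornology Metric Set
open scoped ENNReal Topology

theorem Continuous.tendsto_nhds_of_tendsto_comp {X Y ι : Type*} [TopologicalSpace X]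
    [TopologicalSpace Y] [T2Space Y] {f : X → Y} {x₀ : X} {b : Y} {l : Filter ι} {u : ι → X}
    (hf : Continuous f) (hfib : ∀ x, f x = b → x = x₀)
    (hcoc : ¬MapClusterPt b (cocompact X) f) (hu : Tendsto (f ∘ u) l (𝓝 b)) :
    Tendsto u l (𝓝 x₀) := by
  obtain ⟨s, hs, hfs⟩ : ∃ s ∈ 𝓝 b, ∀ᶠ x in cocompact X, f x ∉ s := by
    simpa [mapClusterPt_iff_frequently] using hcoc
  obtain ⟨K, hK, hKs⟩ := mem_cocompact.1 hfs
  refine hK.tendsto_nhds_of_unique_mapClusterPt ?_ fun x _ hx => hfib x ?_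
  · filter_upwards [hu hs] with i hi
    by_contra hiK
    exact hKs hiK hi
  · exact eq_of_nhds_neBot ((hx.continuousAt_comp hf.continuousAt).clusterPt.mono hu)

theorem tendsto_nsmul_cobounded {E : Type*} [NormedAddCommGroup E] [NormedSpace ℝ E] {z : E}
    (hz : z ≠ 0) : Tendsto (fun k : ℕ => k • z) atTop (cobounded E) := by
  rw [← tendsto_norm_atTop_iff_cobounded]
  simp only [RCLike.norm_nsmul ℝ, nsmul_eq_mul]
  exact tendsto_natCast_atTop_atTop.atTop_mul_const (norm_pos_iff.2 hz)

noncomputable def translationDefect {E F : Type*} [Sub E] [NormedAddCommGroup F]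
    [MeasurableSpace E] (Φ : E → F) (p : ℝ≥0∞) (μ : Measure E) (z : E) : ℝ≥0∞ :=
  eLpNorm (fun x => Φ (x - z) - Φ x) p μ

section

variable {E F : Type*} [NormedAddCommGroup E] [MeasurableSpace E] [BorelSpace E]
  {μ : Measure E} [μ.IsAddRightInvariant] {z : E}

theorem ae_eq_comp_sub_nsmul {α : Type*} {Φ : E → α} (h : (fun x => Φ (x - z)) =ᵐ[μ] Φ)
    (k : ℕ) : (fun x => Φ (x - k • z)) =ᵐ[μ] Φ := by
  induction k with
  | zero => simp
  | succ k ih =>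
    have := (measurePreserving_sub_right μ z).quasiMeasurePreserving.ae_eq_comp ih
    refine EventuallyEq.trans (.of_eq (funext fun x => ?_)) (this.trans h)
    simp only [Function.comp, succ_nsmul', sub_sub]

variable [NormedAddCommGroup F] {p : ℝ≥0∞} {Φ : E → F}

theorem MeasureTheory.AEStronglyMeasurable.comp_sub_right (hΦ : AEStronglyMeasurable Φ μ)
    (z : E) : AEStronglyMeasurable (fun x => Φ (x - z)) μ :=
  hΦ.comp_measurePreserving (measurePreserving_sub_right μ z)

theorem translationDefect_eq_zero_iff (hΦ : AEStronglyMeasurable Φ μ) (hp : p ≠ 0) :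
    translationDefect Φ p μ z = 0 ↔ (fun x => Φ (x - z)) =ᵐ[μ] Φ :=
  (eLpNorm_eq_zero_iff ((hΦ.comp_sub_right z).sub hΦ) hp).trans (sub_ae_eq_zero _ _)

theorem translationDefect_le_two_mul (hΦ : AEStronglyMeasurable Φ μ) (hp₁ : 1 ≤ p) :
    translationDefect Φ p μ z ≤ 2 * eLpNorm Φ p μ := by
  calc translationDefect Φ p μ z ≤ eLpNorm (fun x => Φ (x - z)) p μ + eLpNorm Φ p μ :=
        eLpNorm_sub_le (hΦ.comp_sub_right z) hΦ hp₁
    _ = 2 * eLpNorm Φ p μ := by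
        rw [← eLpNorm_comp_measurePreserving hΦ (measurePreserving_sub_right μ z), two_mul]
        rfl

theorem translationDefect_sub_le {Ψ : E → F} (hΦ : AEStronglyMeasurable Φ μ)
    (hΨ : AEStronglyMeasurable Ψ μ) (hp₁ : 1 ≤ p) :
    translationDefect (Φ - Ψ) p μ z ≤ translationDefect Φ p μ z + translationDefect Ψ p μ z := by
  calc translationDefect (Φ - Ψ) p μ z
      = eLpNorm ((fun x => Φ (x - z) - Φ x) - fun x => Ψ (x - z) - Ψ x) p μ := by
        rw [translationDefect]
        congr 1
        ext x
        simp only [Pi.sub_apply]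
        abel
    _ ≤ _ := eLpNorm_sub_le ((hΦ.comp_sub_right z).sub hΦ) ((hΨ.comp_sub_right z).sub hΨ) hp₁

theorem eLpNorm_le_translationDefect_of_support_subset {g : E → F} {R : ℝ}
    (hg : AEStronglyMeasurable g μ) (hsupp : Function.support g ⊆ closedBall 0 R)
    (hz : 2 * R < ‖z‖) : eLpNorm g p μ ≤ translationDefect g p μ z := by
  rw [← eLpNorm_comp_measurePreserving hg (measurePreserving_sub_right μ z)]
  refine eLpNorm_mono fun x => ?_
  by_cases hx : g x = 0
  · simp [hx]
  have hxz : g (x - z) = 0 := by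
    refine Function.notMem_support.1 fun hxz => ?_
    have h₁ := mem_closedBall_zero_iff.1 (hsupp hx)
    have h₂ := mem_closedBall_zero_iff.1 (hsupp hxz)
    have h₃ := norm_sub_norm_le z x
    rw [norm_sub_rev] at h₃
    linarith
  simp [hxz]

theorem continuous_translationDefect [IsLocallyFiniteMeasure μ] [μ.InnerRegularCompactLTTop]
    [Fact (1 ≤ p)] (hΦ : MemLp Φ p μ) (hp : p ≠ ∞) : Continuous (translationDefect Φ p μ) := by
  let τ : E → C(E, E) := fun z => ⟨(· - z), by fun_prop⟩
  have hτ (z : E) : MeasurePreserving (τ z) μ μ := measurePreserving_sub_right μ z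
  have hτ_cont : Continuous τ :=
    ContinuousMap.continuous_of_continuous_uncurry _ (continuous_snd.sub continuous_fst)
  have hdefect_eq_edist : translationDefect Φ p μ =
      fun z => edist (Lp.compMeasurePreserving (τ z) (hτ z) (hΦ.toLp Φ)) (hΦ.toLp Φ) := by
    ext z
    rw [Lp.edist_def]
    refine eLpNorm_congr_ae ?_
    filter_upwards [Lp.coeFn_compMeasurePreserving (hΦ.toLp Φ) (hτ z),
      (hτ z).quasiMeasurePreserving.ae_eq_comp hΦ.coeFn_toLp, hΦ.coeFn_toLp] with x h₁ h₂ h₃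
    simp only [Pi.sub_apply, h₁, h₂, h₃]
    rfl
  rw [hdefect_eq_edist]
  exact (continuous_const.compMeasurePreservingLp hτ_cont hτ hp).edist continuous_const

variable [WeaklyLocallyCompactSpace E] [μ.Regular] [NormedSpace ℝ F]

theorem eventually_eLpNorm_le_translationDefect_add (hΦ : MemLp Φ p μ) (hp₁ : 1 ≤ p)
    (hp : p ≠ ∞) {ε : ℝ≥0∞} (hε : ε ≠ 0) :
    ∀ᶠ z in cobounded E, eLpNorm Φ p μ ≤ translationDefect Φ p μ z + ε := by
  have hε₃ : ε / 3 ≠ 0 := ENNReal.div_ne_zero.2 ⟨hε, by norm_num⟩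
  obtain ⟨g, hg_supp, hΦg, -, hg⟩ := hΦ.exists_hasCompactSupport_eLpNorm_sub_le hp hε₃
  obtain ⟨R, hR⟩ := hg_supp.isCompact.isBounded.subset_closedBall 0
  replace hg := hg.1
  filter_upwards [tendsto_norm_cobounded_atTop.eventually_gt_atTop (2 * R)] with z hz
  calc eLpNorm Φ p μ = eLpNorm ((Φ - g) + g) p μ := by rw [sub_add_cancel]
    _ ≤ ε / 3 + translationDefect g p μ z :=
        (eLpNorm_add_le (hΦ.1.sub hg) hg hp₁).trans <| add_le_add hΦg <|
          eLpNorm_le_translationDefect_of_support_subset hg ((subset_tsupport g).trans hR) hz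
    _ ≤ ε / 3 + (translationDefect Φ p μ z + 2 * (ε / 3)) := by
        gcongr
        calc translationDefect g p μ z = translationDefect (Φ - (Φ - g)) p μ z := by
              rw [sub_sub_cancel]
          _ ≤ translationDefect Φ p μ z + translationDefect (Φ - g) p μ z :=
              translationDefect_sub_le hΦ.1 (hΦ.1.sub hg) hp₁
          _ ≤ translationDefect Φ p μ z + 2 * (ε / 3) := by
              gcongr
              exact (translationDefect_le_two_mul (hΦ.1.sub hg) hp₁).trans (by gcongr)
    _ = translationDefect Φ p μ z + (ε / 3 + ε / 3 + ε / 3) := by ring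
    _ = translationDefect Φ p μ z + ε := by rw [ENNReal.add_thirds]

theorem not_mapClusterPt_translationDefect (hΦ : MemLp Φ p μ) (hp₁ : 1 ≤ p) (hp : p ≠ ∞)
    (hΦ0 : ¬Φ =ᵐ[μ] 0) : ¬MapClusterPt 0 (cobounded E) (translationDefect Φ p μ) := by
  have hN : eLpNorm Φ p μ ≠ 0 :=
    mt (eLpNorm_eq_zero_iff hΦ.1 (one_pos.trans_le hp₁).ne').1 hΦ0
  have hN₂ : eLpNorm Φ p μ / 2 ≠ 0 := ENNReal.div_ne_zero.2 ⟨hN, by norm_num⟩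
  rw [mapClusterPt_iff_frequently]
  push Not
  refine ⟨Iio (eLpNorm Φ p μ / 2), Iio_mem_nhds (pos_iff_ne_zero.2 hN₂), ?_⟩
  filter_upwards [eventually_eLpNorm_le_translationDefect_add hΦ hp₁ hp hN₂] with z hz hlt
  refine (hz.trans_lt ?_).false
  calc translationDefect Φ p μ z + eLpNorm Φ p μ / 2 < eLpNorm Φ p μ / 2 + eLpNorm Φ p μ / 2 :=
        ENNReal.add_lt_add_right (ENNReal.div_ne_top hΦ.2.ne (by norm_num)) hlt
    _ = eLpNorm Φ p μ := ENNReal.add_halves _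

theorem translationDefect_ne_zero [NormedSpace ℝ E] (hΦ : MemLp Φ p μ) (hp₁ : 1 ≤ p)
    (hp : p ≠ ∞) (hΦ0 : ¬Φ =ᵐ[μ] 0) (hz : z ≠ 0) : translationDefect Φ p μ z ≠ 0 := by
  intro h
  have hp₀ : p ≠ 0 := (one_pos.trans_le hp₁).ne'
  have hper := (translationDefect_eq_zero_iff hΦ.1 hp₀).1 h
  have hzero : translationDefect Φ p μ ∘ (fun k : ℕ => k • z) = 0 :=
    funext fun k => (translationDefect_eq_zero_iff hΦ.1 hp₀).2 (ae_eq_comp_sub_nsmul hper k)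
  refine not_mapClusterPt_translationDefect hΦ hp₁ hp hΦ0
    (.of_comp (tendsto_nsmul_cobounded hz) ?_)
  rw [hzero]
  exact tendsto_const_nhds.mapClusterPt

end

theorem translation_convergence_implies_zero
    (d : ℕ)
    (Φ : EuclideanSpace ℝ (Fin d) → ℂ)
    (hΦ : MemLp Φ 2 (volume : Measure (EuclideanSpace ℝ (Fin d))))
    (hΦ0 : ¬ (Φ =ᵐ[(volume : Measure (EuclideanSpace ℝ (Fin d)))] 0))
    (y : ℕ → EuclideanSpace ℝ (Fin d))
    (hy : Tendsto (fun n => eLpNorm (fun x => Φ (x - y n) - Φ x) 2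
        (volume : Measure (EuclideanSpace ℝ (Fin d)))) atTop (nhds 0)) :
    Tendsto y atTop (nhds 0) := by
  have hp : (2 : ℝ≥0∞) ≠ ∞ := ENNReal.ofNat_ne_top
  refine (continuous_translationDefect hΦ hp).tendsto_nhds_of_tendsto_comp
    (fun z hz => ?_) ?_ hy
  · by_contra hz₀
    exact translationDefect_ne_zero hΦ one_le_two hp hΦ0 hz₀ hz
  · rw [← cobounded_eq_cocompact]
    exact not_mapClusterPt_translationDefect hΦ one_le_two hp hΦ0
end

section
/- Let f : ℂ → ℂ be twice continuously differentiable when viewed as a map ℝ² → ℝ², with f(0) = 0 and with the (real Fréchet) derivative of f at 0 equal to 0. Then for every R > 0 there exists a constant C = C(R) > 0 such that for all a, b ∈ ℂ with |a| ≤ R and |b| ≤ R one has |f(a + b) − f(a) − f(b)| ≤ C · |a| · |b|. -/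
/-!
`f (a + b) - f a - f b + f 0` is the increment over `[0, 1]` of `t ↦ f (a + t • b) - f (t • b)`,
whose derivative `Df (a + t • b) b - Df (t • b) b` has norm at most `K ‖a‖ ‖b‖` as soon as `Df`
is `K`-Lipschitz along the segments involved. A `C²` map on `ℂ` has a derivative that is
Lipschitz on the compact convex ball of radius `2R`, which contains all these segments.
-/

open Set NNReal

section SecondDifference

variable {E F : Type*} [NormedAddCommGroup E] [NormedSpace ℝ E]
  [NormedAddCommGroup F] [NormedSpace ℝ F]
  {s : Set E} {f : E → F} {f' : E → E →L[ℝ] F}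

theorem Convex.hasDerivWithinAt_comp_add_smul (hs : Convex ℝ s)
    (hf : ∀ x ∈ s, HasFDerivWithinAt f (f' x) s x) {x v : E} (hx : x ∈ s) (hxv : x + v ∈ s)
    {t : ℝ} (ht : t ∈ Icc (0 : ℝ) 1) :
    HasDerivWithinAt (fun t : ℝ ↦ f (x + t • v)) (f' (x + t • v) v) (Icc 0 1) t := by
  have hline : HasDerivWithinAt (fun t : ℝ ↦ x + t • v) v (Icc 0 1) t := by
    simpa using ((hasDerivWithinAt_id t _).smul_const v).const_add x
  exact (hf _ (hs.add_smul_mem hx hxv ht)).comp_hasDerivWithinAt t hline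
    fun _ hu ↦ hs.add_smul_mem hx hxv hu

theorem Convex.norm_second_difference_le (hs : Convex ℝ s)
    (hf : ∀ x ∈ s, HasFDerivWithinAt f (f' x) s x) {K : ℝ≥0} (hf' : LipschitzOnWith K f' s)
    {x a b : E} (hx : x ∈ s) (ha : x + a ∈ s) (hb : x + b ∈ s) (hab : x + a + b ∈ s) :
    ‖f (x + a + b) - f (x + a) - f (x + b) + f x‖ ≤ K * ‖a‖ * ‖b‖ := by
  have hderiv (t : ℝ) (ht : t ∈ Icc (0 : ℝ) 1) :
      HasDerivWithinAt (fun t : ℝ ↦ f (x + a + t • b) - f (x + t • b))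
        (f' (x + a + t • b) b - f' (x + t • b) b) (Icc 0 1) t :=
    (hs.hasDerivWithinAt_comp_add_smul hf ha hab ht).sub
      (hs.hasDerivWithinAt_comp_add_smul hf hx hb ht)
  have hbound (t : ℝ) (ht : t ∈ Ico (0 : ℝ) 1) :
      ‖f' (x + a + t • b) b - f' (x + t • b) b‖ ≤ K * ‖a‖ * ‖b‖ :=
    calc ‖f' (x + a + t • b) b - f' (x + t • b) b‖
        ≤ ‖f' (x + a + t • b) - f' (x + t • b)‖ * ‖b‖ := by
          rw [← sub_apply]; exact ContinuousLinearMap.le_opNorm _ _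
      _ ≤ K * ‖a‖ * ‖b‖ := by
          gcongr
          simpa [add_sub_add_right_eq_sub, add_sub_cancel_left] using
            hf'.norm_sub_le (hs.add_smul_mem ha hab (Ico_subset_Icc_self ht))
              (hs.add_smul_mem hx hb (Ico_subset_Icc_self ht))
  have key := norm_image_sub_le_of_norm_deriv_le_segment_01' hderiv hbound
  simp only [one_smul, zero_smul, add_zero] at key
  convert key using 2
  abel

end SecondDifference

theorem nonlinear_interaction_bound_general
    (f : ℂ → ℂ) (hf : ContDiff ℝ 2 f) (hf0 : f 0 = 0) :
    ∀ R : ℝ, 0 < R → ∃ C : ℝ, 0 < C ∧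
      ∀ a b : ℂ, ‖a‖ ≤ R → ‖b‖ ≤ R →
        ‖f (a + b) - f a - f b‖ ≤ C * ‖a‖ * ‖b‖ := by
  intro R hR
  set s := Metric.closedBall (0 : ℂ) (2 * R)
  obtain ⟨K, hK⟩ := (hf.fderiv_right (m := 1) le_rfl).contDiffOn.exists_lipschitzOnWith
    one_ne_zero (convex_closedBall 0 (2 * R)) (isCompact_closedBall 0 (2 * R))
  have hf_deriv (x : ℂ) (_ : x ∈ s) : HasFDerivWithinAt f (fderiv ℝ f x) s x :=
    ((hf.differentiable two_ne_zero) x).hasFDerivAt.hasFDerivWithinAt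
  refine ⟨K + 1, by positivity, fun a b ha hb ↦ ?_⟩
  have mem {z : ℂ} (hz : ‖z‖ ≤ 2 * R) : z ∈ s := mem_closedBall_zero_iff.2 hz
  have key := (convex_closedBall 0 (2 * R)).norm_second_difference_le hf_deriv hK
    (x := 0) (a := a) (b := b) (mem (by simp; positivity)) (mem (by simp; linarith))
    (mem (by simp; linarith))
    (mem (by simpa using (norm_add_le a b).trans (by linarith)))
  simp only [zero_add, hf0, add_zero] at key
  calc ‖f (a + b) - f a - f b‖ ≤ K * ‖a‖ * ‖b‖ := key
    _ ≤ (K + 1) * ‖a‖ * ‖b‖ := by gcongr; linarith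

theorem nonlinear_interaction_bound
    (f : ℂ → ℂ) (hf : ContDiff ℝ 2 f) (hf0 : f 0 = 0)
    (hdf0 : fderiv ℝ f 0 = 0) :
    ∀ R : ℝ, 0 < R → ∃ C : ℝ, 0 < C ∧
      ∀ a b : ℂ, ‖a‖ ≤ R → ‖b‖ ≤ R →
        ‖f (a + b) - f a - f b‖ ≤ C * ‖a‖ * ‖b‖ :=
  nonlinear_interaction_bound_general f hf hf0
end

section
/- Let d ≥ 1 be an integer, let τ > 0, R > 0 and C_R ≥ 0. Let w : ℝ^d → ℝ be a nonnegative, twice continuously differentiable function such that w(x) → 0 as ‖x‖ → ∞, w(x) ≤ C_R for all x with ‖x‖ ≤ R, and Δw(x) ≥ (τ/2) · w(x) for all x with ‖x‖ > R. Then w(x) ≤ C_R · e^{√(τ/2) · (R − ‖x‖)} for all x ∈ ℝ^d. -/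
/-!
Fix `x` and compare `w` with the plane wave `v y = C_R e^{μ (R - ⟪e, y⟫)}`, where `μ = √(τ/2)`
and `e = x / ‖x‖`. Then `Δv = μ² ‖e‖² v ≤ (τ/2) v`, `v ≥ C_R` on the ball of radius `R`, and `v x`
is the claimed bound. If `w - v` were positive somewhere, it would attain a positive maximum (as `w → 0`
and `v ≥ 0`), necessarily outside the ball, where `Δ(w - v) ≤ 0` gives
`(τ/2) w ≤ Δw ≤ Δv ≤ (τ/2) v`, a contradiction. Unlike the radial `e^{-μ‖y‖}`, the plane wave has
no curvature term in its Laplacian and is smooth at the origin.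
-/

open Filter

/-- The pointwise Laplacian of a function on `ℝ^d`: the sum of its unmixed second
partial derivatives in the coordinate directions. -/
noncomputable def laplacian {d : ℕ} {F : Type*} [NormedAddCommGroup F] [NormedSpace ℝ F]
    (f : EuclideanSpace ℝ (Fin d) → F) (x : EuclideanSpace ℝ (Fin d)) : F :=
  ∑ i : Fin d, fderiv ℝ (fun y => fderiv ℝ f y (EuclideanSpace.single i 1)) x
    (EuclideanSpace.single i 1)

open scoped RealInnerProductSpace

theorem deriv_deriv_nonpos_of_isLocalMax {g : ℝ → ℝ} {t : ℝ} (h : IsLocalMax g t)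
    (hc : ContinuousAt g t) : deriv (deriv g) t ≤ 0 := by
  by_contra! hpos
  -- `g'' t > 0` would make `t` a local minimum as well, so `g` would be locally constant.
  have hconst : g =ᶠ[nhds t] fun _ => g t :=
    (h.and (isLocalMin_of_deriv_deriv_pos hpos h.deriv_eq_zero hc)).mono
      fun _ hs => le_antisymm hs.1 hs.2
  have : deriv (deriv g) t = 0 := by rw [hconst.deriv.deriv_eq]; simp
  linarith

theorem fderiv_fderiv_apply_nonpos_of_isLocalMax {E : Type*} [NormedAddCommGroup E]
    [NormedSpace ℝ E] {f : E → ℝ} {x v : E} (hf : Differentiable ℝ f)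
    (hf' : DifferentiableAt ℝ (fun y => fderiv ℝ f y v) x) (h : IsLocalMax f x) :
    fderiv ℝ (fun y => fderiv ℝ f y v) x v ≤ 0 := by
  have hline : ∀ t : ℝ, HasDerivAt (fun s : ℝ => x + s • v) v t := fun t => by
    simpa using ((hasDerivAt_id t).smul_const v).const_add x
  have hderiv : deriv (fun t : ℝ => f (x + t • v)) = fun t => fderiv ℝ f (x + t • v) v :=
    funext fun t => ((hf _).hasFDerivAt.comp_hasDerivAt t (hline t)).deriv
  have hmax : IsLocalMax (fun t : ℝ => f (x + t • v)) 0 :=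
    IsLocalMax.comp_continuous (by simpa using h) (hline 0).continuousAt
  have hcont : ContinuousAt (fun t : ℝ => f (x + t • v)) 0 :=
    (hf.continuous.comp (continuous_const.add (continuous_id.smul continuous_const))).continuousAt
  have hsecond := (hf'.hasFDerivAt.comp_hasDerivAt_of_eq 0 (hline 0) (by simp)).deriv
  simp only [Function.comp_def] at hsecond
  rw [← hsecond, ← hderiv]
  exact deriv_deriv_nonpos_of_isLocalMax hmax hcont

theorem ContDiff.differentiable_fderiv_apply {E F : Type*} [NormedAddCommGroup E]
    [NormedSpace ℝ E] [NormedAddCommGroup F] [NormedSpace ℝ F] {f : E → F}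
    (hf : ContDiff ℝ 2 f) (v : E) : Differentiable ℝ (fun y => fderiv ℝ f y v) :=
  ((hf.fderiv_right (by norm_num)).clm_apply contDiff_const).differentiable one_ne_zero

theorem fderiv_mul_exp_inner_add_apply {E : Type*} [NormedAddCommGroup E]
    [InnerProductSpace ℝ E] (c b : ℝ) (a y u : E) :
    fderiv ℝ (fun z => c * Real.exp (⟪a, z⟫ + b)) y u = ⟪a, u⟫ * (c * Real.exp (⟪a, y⟫ + b)) := by
  have hlin : HasFDerivAt (fun z => ⟪a, z⟫ + b) (innerSL ℝ a) y :=
    (innerSL ℝ a).hasFDerivAt.add_const b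
  rw [(hlin.exp.const_mul c).fderiv]
  simp only [smul_apply, innerSL_apply_apply, smul_eq_mul]
  ring

section Laplacian

variable {d : ℕ}

theorem laplacian_nonpos_of_isLocalMax {f : EuclideanSpace ℝ (Fin d) → ℝ}
    {x : EuclideanSpace ℝ (Fin d)} (hf : ContDiff ℝ 2 f) (h : IsLocalMax f x) :
    laplacian f x ≤ 0 :=
  Finset.sum_nonpos fun i _ => fderiv_fderiv_apply_nonpos_of_isLocalMax
    (hf.differentiable (by norm_num)) (hf.differentiable_fderiv_apply _ x) h

theorem laplacian_sub {f g : EuclideanSpace ℝ (Fin d) → ℝ} (hf : ContDiff ℝ 2 f)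
    (hg : ContDiff ℝ 2 g) (x : EuclideanSpace ℝ (Fin d)) :
    laplacian (f - g) x = laplacian f x - laplacian g x := by
  rw [laplacian, laplacian, laplacian, ← Finset.sum_sub_distrib]
  refine Finset.sum_congr rfl fun i _ => ?_
  set e : EuclideanSpace ℝ (Fin d) := EuclideanSpace.single i 1
  have hfirst : (fun y => fderiv ℝ (f - g) y e) = fun y => fderiv ℝ f y e - fderiv ℝ g y e :=
    funext fun y => by
      rw [fderiv_sub (hf.differentiable (by norm_num) y) (hg.differentiable (by norm_num) y)]
      rfl
  rw [hfirst,
    fderiv_fun_sub (hf.differentiable_fderiv_apply e x) (hg.differentiable_fderiv_apply e x)]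
  rfl

theorem laplacian_mul_exp_inner_add (c b : ℝ) (a x : EuclideanSpace ℝ (Fin d)) :
    laplacian (fun y => c * Real.exp (⟪a, y⟫ + b)) x = ‖a‖ ^ 2 * (c * Real.exp (⟪a, x⟫ + b)) := by
  simp only [laplacian, fderiv_mul_exp_inner_add_apply, ← mul_assoc,
    EuclideanSpace.inner_single_right, one_mul, conj_trivial]
  rw [EuclideanSpace.real_norm_sq_eq, Finset.sum_mul, Finset.sum_mul]
  simp only [sq]

theorem le_of_laplacian_comparison_exterior {k R : ℝ} (hk : 0 < k)
    {w v : EuclideanSpace ℝ (Fin d) → ℝ} (hw : ContDiff ℝ 2 w) (hv : ContDiff ℝ 2 v)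
    (hw_decay : Tendsto w (comap norm atTop) (nhds 0)) (hv_nonneg : ∀ y, 0 ≤ v y)
    (h_ball : ∀ y, ‖y‖ ≤ R → w y ≤ v y)
    (hw_sub : ∀ y, R < ‖y‖ → k * w y ≤ laplacian w y)
    (hv_super : ∀ y, R < ‖y‖ → laplacian v y ≤ k * v y) (x : EuclideanSpace ℝ (Fin d)) :
    w x ≤ v x := by
  by_contra! hx
  have hfar : ∀ᶠ y in cocompact _, (w - v) y ≤ (w - v) x := by
    rw [← Metric.cobounded_eq_cocompact, ← comap_norm_atTop]
    filter_upwards [hw_decay.eventually (gt_mem_nhds (sub_pos.2 hx))] with y hy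
    simp only [Pi.sub_apply]
    linarith [hv_nonneg y]
  obtain ⟨x₀, hx₀⟩ := (hw.continuous.sub hv.continuous).exists_forall_ge' x hfar
  have hpos : v x₀ < w x₀ := sub_pos.1 ((sub_pos.2 hx).trans_le (hx₀ x))
  have hR : R < ‖x₀‖ := by
    by_contra! h
    exact (h_ball x₀ h).not_gt hpos
  have hlap : laplacian w x₀ ≤ laplacian v x₀ := by
    have := laplacian_nonpos_of_isLocalMax (f := w - v) (hw.sub hv) (Eventually.of_forall hx₀)
    rwa [laplacian_sub hw hv, sub_nonpos] at this
  have : k * w x₀ ≤ k * v x₀ := (hw_sub x₀ hR).trans (hlap.trans (hv_super x₀ hR))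
  exact (le_of_mul_le_mul_left this hk).not_gt hpos

end Laplacian

theorem maximum_principle_exponential_decay_general
    (d : ℕ) (τ R CR : ℝ) (hτ : 0 < τ) (hCR : 0 ≤ CR)
    (w : EuclideanSpace ℝ (Fin d) → ℝ)
    (hw_smooth : ContDiff ℝ 2 w)
    (hw_decay : Tendsto w (comap norm atTop) (nhds 0))
    (hw_bound : ∀ x, ‖x‖ ≤ R → w x ≤ CR)
    (hw_sub : ∀ x, R < ‖x‖ → laplacian w x ≥ (τ / 2) * w x) :
    ∀ x : EuclideanSpace ℝ (Fin d), w x ≤ CR * Real.exp (Real.sqrt (τ / 2) * (R - ‖x‖)) := by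
  intro x
  set μ := Real.sqrt (τ / 2)
  have hμ : 0 ≤ μ := Real.sqrt_nonneg _
  set a : EuclideanSpace ℝ (Fin d) := -(μ * ‖x‖⁻¹) • x
  have ha : ‖a‖ ≤ μ := by
    rw [norm_smul, norm_neg, Real.norm_of_nonneg (by positivity), mul_assoc]
    exact mul_le_of_le_one_right hμ inv_mul_le_one
  have hax : ⟪a, x⟫ = -(μ * ‖x‖) := by
    rw [real_inner_smul_left, real_inner_self_eq_norm_sq]
    linear_combination (-μ) * inv_mul_mul_self ‖x‖
  have hv_ball : ∀ y : EuclideanSpace ℝ (Fin d), ‖y‖ ≤ R → CR ≤ CR * Real.exp (⟪a, y⟫ + μ * R) :=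
    fun y hy => le_mul_of_one_le_right hCR (Real.one_le_exp (by
      nlinarith [neg_abs_le ⟪a, y⟫, abs_real_inner_le_norm a y, norm_nonneg a, norm_nonneg y]))
  have hcomp := le_of_laplacian_comparison_exterior (v := fun y => CR * Real.exp (⟪a, y⟫ + μ * R))
    (half_pos hτ) hw_smooth
    (contDiff_const.mul ((contDiff_const.inner ℝ contDiff_id).add contDiff_const).exp)
    hw_decay (fun y => by positivity) (fun y hy => (hw_bound y hy).trans (hv_ball y hy)) hw_sub
    (fun y _ => by
      rw [laplacian_mul_exp_inner_add, ← Real.sq_sqrt (half_pos hτ).le]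
      gcongr)
    x
  rwa [hax, show -(μ * ‖x‖) + μ * R = μ * (R - ‖x‖) by ring] at hcomp

theorem maximum_principle_exponential_decay
    (d : ℕ) (hd : 1 ≤ d) (τ R CR : ℝ) (hτ : 0 < τ) (hR : 0 < R) (hCR : 0 ≤ CR)
    (w : EuclideanSpace ℝ (Fin d) → ℝ)
    (hw_nonneg : ∀ x, 0 ≤ w x)
    (hw_smooth : ContDiff ℝ 2 w)
    (hw_decay : Tendsto w (comap norm atTop) (nhds 0))
    (hw_bound : ∀ x, ‖x‖ ≤ R → w x ≤ CR)
    (hw_sub : ∀ x, R < ‖x‖ → laplacian w x ≥ (τ / 2) * w x) :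
    ∀ x : EuclideanSpace ℝ (Fin d), w x ≤ CR * Real.exp (Real.sqrt (τ / 2) * (R - ‖x‖)) :=
  maximum_principle_exponential_decay_general d τ R CR hτ hCR w hw_smooth hw_decay hw_bound hw_sub
end

section
/- Let H be a complex Banach space, let T₀ ∈ ℝ, λ > 0, C > 0, and K ≥ 0 with K ≤ λ/2. Let g : ℝ × H → H be continuous and satisfy, for all τ ≥ T₀ and all a, b ∈ H: ‖g(τ, a) − g(τ, b)‖ ≤ K ‖a − b‖ and ‖g(τ, 0)‖ ≤ C e^{−λτ}. Then there exists a unique continuous function v : [T₀, ∞) → H such that ‖v(t)‖ ≤ (2C/λ) e^{−λt} for all t ≥ T₀ and such that for all t ≥ T₀ the function τ ↦ g(τ, v(τ)) is Bochner integrable over [t, ∞) with v(t) = ∫_t^∞ g(τ, v(τ)) dτ. -/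
/-!
Substituting `v t = e^{-λt} w t` turns the integral equation into the fixed-point equation
`w = Φ w` on the Banach space `ℝ →ᵇ H`, where `Φ w t = e^{λt} ∫_t^∞ g(τ, e^{-λτ} w τ) dτ`
(frozen at `T₀` for `t < T₀`). Because `∫_t^∞ e^{-λτ} dτ = e^{-λt} / λ`, the Lipschitz bound
on `g` makes `Φ` a contraction with constant `K / λ`, and the fixed point obeys
`‖w‖ ≤ (C + K ‖w‖) / λ`, that is `‖w‖ ≤ C / (λ - K) ≤ 2C / λ`. Conversely, a solution decaying
like `e^{-λt}` gives a bounded `w` that is a fixed point of `Φ`, hence the unique one.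
-/

open MeasureTheory Set Real
open scoped BoundedContinuousFunction

noncomputable section

theorem integral_exp_neg_mul_Ici {lam : ℝ} (hlam : 0 < lam) (t : ℝ) :
    ∫ τ in Ici t, exp (-lam * τ) = exp (-lam * t) / lam := by
  rw [integral_Ici_eq_integral_Ioi, integral_exp_mul_Ioi (neg_neg_of_pos hlam), neg_div_neg_eq]

theorem integrableOn_exp_neg_mul_Ici {lam : ℝ} (hlam : 0 < lam) (t : ℝ) :
    IntegrableOn (fun τ => exp (-lam * τ)) (Ici t) :=
  (integrableOn_Ici_iff_integrableOn_Ioi).2 (exp_neg_integrableOn_Ioi t hlam)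

variable {E : Type*} [NormedAddCommGroup E]

structure IsExpDecayLipschitz (g : ℝ × E → E) (T₀ lam C K : ℝ) : Prop where
  lam_pos : 0 < lam
  K_nonneg : 0 ≤ K
  continuous : Continuous g
  lipschitz : ∀ τ ≥ T₀, ∀ a b : E, ‖g (τ, a) - g (τ, b)‖ ≤ K * ‖a - b‖
  norm_zero_le : ∀ τ ≥ T₀, ‖g (τ, 0)‖ ≤ C * exp (-lam * τ)

theorem IsExpDecayLipschitz.C_nonneg {g : ℝ × E → E} {T₀ lam C K : ℝ}
    (hg : IsExpDecayLipschitz g T₀ lam C K) : 0 ≤ C :=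
  nonneg_of_mul_nonneg_left ((norm_nonneg _).trans (hg.norm_zero_le T₀ le_rfl)) (exp_pos _)

theorem integrableOn_Ici_of_norm_le_mul_exp {f : ℝ → E} {A lam t : ℝ} (hlam : 0 < lam)
    (hf : AEStronglyMeasurable f (volume.restrict (Ici t)))
    (hb : ∀ τ ≥ t, ‖f τ‖ ≤ A * exp (-lam * τ)) : IntegrableOn f (Ici t) :=
  ((integrableOn_exp_neg_mul_Ici hlam t).const_mul A).mono' hf
    ((ae_restrict_iff' measurableSet_Ici).2 (ae_of_all _ hb))

variable [NormedSpace ℝ E]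

theorem norm_setIntegral_Ici_le_of_norm_le_mul_exp {f : ℝ → E} {A lam t : ℝ} (hlam : 0 < lam)
    (hb : ∀ τ ≥ t, ‖f τ‖ ≤ A * exp (-lam * τ)) :
    ‖∫ τ in Ici t, f τ‖ ≤ A / lam * exp (-lam * t) :=
  calc ‖∫ τ in Ici t, f τ‖ ≤ ∫ τ in Ici t, A * exp (-lam * τ) :=
        norm_integral_le_of_norm_le ((integrableOn_exp_neg_mul_Ici hlam t).const_mul A)
          ((ae_restrict_iff' measurableSet_Ici).2 (ae_of_all _ hb))
    _ = A / lam * exp (-lam * t) := by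
        rw [integral_const_mul, integral_exp_neg_mul_Ici hlam]; ring

theorem continuousOn_setIntegral_Ici {f : ℝ → E} {a : ℝ} (hf : IntegrableOn f (Ici a)) :
    ContinuousOn (fun t => ∫ τ in Ici t, f τ) (Ici a) := by
  simp_rw [integral_Ici_eq_integral_Ioi]
  exact ((integrableOn_Ici_iff_integrableOn_Ioi).1 hf).continuousOn_Ici_primitive_Ioi

section Weight

variable {T₀ lam : ℝ}

def expWeight (T₀ lam : ℝ) (v : ℝ → E) (t : ℝ) : E := exp (lam * max t T₀) • v (max t T₀)

def expDamp (lam : ℝ) (w : ℝ → E) (t : ℝ) : E := exp (-lam * t) • w t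

theorem continuous_expWeight {v : ℝ → E} (hv : ContinuousOn v (Ici T₀)) :
    Continuous (expWeight T₀ lam v) := by
  have hmax : Continuous fun t : ℝ => max t T₀ := continuous_id.max continuous_const
  exact (continuous_exp.comp (continuous_const.mul hmax)).smul
    (hv.comp_continuous hmax fun t => le_max_right t T₀)

theorem norm_expWeight_le {v : ℝ → E} {M : ℝ} (hb : ∀ t ≥ T₀, ‖v t‖ ≤ M * exp (-lam * t))
    (t : ℝ) : ‖expWeight T₀ lam v t‖ ≤ M :=
  calc ‖expWeight T₀ lam v t‖ = exp (lam * max t T₀) * ‖v (max t T₀)‖ := by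
        rw [expWeight, norm_smul, norm_of_nonneg (exp_pos _).le]
    _ ≤ exp (lam * max t T₀) * (M * exp (-lam * max t T₀)) :=
        mul_le_mul_of_nonneg_left (hb _ (le_max_right t T₀)) (exp_pos _).le
    _ = M := by rw [mul_left_comm, ← exp_add]; simp

theorem expWeight_sub (v w : ℝ → E) :
    expWeight T₀ lam (v - w) = expWeight T₀ lam v - expWeight T₀ lam w := by
  ext t; simp [expWeight, smul_sub]

theorem expWeight_congr {v w : ℝ → E} (h : EqOn v w (Ici T₀)) :
    expWeight T₀ lam v = expWeight T₀ lam w := by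
  ext t; rw [expWeight, expWeight, h (le_max_right t T₀)]

theorem expDamp_expWeight (v : ℝ → E) {t : ℝ} (ht : T₀ ≤ t) :
    expDamp lam (expWeight T₀ lam v) t = v t := by
  rw [expDamp, expWeight, max_eq_left ht, smul_smul, ← exp_add]; simp

theorem continuous_expDamp {w : ℝ → E} (hw : Continuous w) : Continuous (expDamp lam w) :=
  (continuous_exp.comp (continuous_const.mul continuous_id)).smul hw

theorem norm_expDamp_le (w : ℝ →ᵇ E) (t : ℝ) : ‖expDamp lam w t‖ ≤ ‖w‖ * exp (-lam * t) := by
  rw [expDamp, norm_smul, norm_of_nonneg (exp_pos _).le, mul_comm]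
  exact mul_le_mul_of_nonneg_right (w.norm_coe_le_norm t) (exp_pos _).le

theorem norm_expDamp_sub_le (w₁ w₂ : ℝ →ᵇ E) (t : ℝ) :
    ‖expDamp lam w₁ t - expDamp lam w₂ t‖ ≤ dist w₁ w₂ * exp (-lam * t) := by
  rw [expDamp, expDamp, ← smul_sub, norm_smul, norm_of_nonneg (exp_pos _).le, mul_comm,
    ← dist_eq_norm]
  exact mul_le_mul_of_nonneg_right (w₁.dist_coe_le_dist t) (exp_pos _).le

def BoundedContinuousFunction.expWeight {v : ℝ → E} {M : ℝ} (hv : ContinuousOn v (Ici T₀))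
    (hb : ∀ t ≥ T₀, ‖v t‖ ≤ M * exp (-lam * t)) : ℝ →ᵇ E :=
  .ofNormedAddCommGroup _ (continuous_expWeight hv) M (norm_expWeight_le hb)

@[simp]
theorem BoundedContinuousFunction.coe_expWeight {v : ℝ → E} {M : ℝ}
    (hv : ContinuousOn v (Ici T₀)) (hb : ∀ t ≥ T₀, ‖v t‖ ≤ M * exp (-lam * t)) :
    ⇑(BoundedContinuousFunction.expWeight hv hb) = _root_.expWeight T₀ lam v :=
  rfl

end Weight

def tailIntegral (g : ℝ × E → E) (v : ℝ → E) (t : ℝ) : E := ∫ τ in Ici t, g (τ, v τ)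

def IsTailSolution (g : ℝ × E → E) (T₀ : ℝ) (v : ℝ → E) : Prop :=
  ∀ t ≥ T₀, IntegrableOn (fun τ => g (τ, v τ)) (Ici t) ∧ v t = tailIntegral g v t

namespace IsExpDecayLipschitz

variable {g : ℝ × E → E} {T₀ lam C K : ℝ} (hg : IsExpDecayLipschitz g T₀ lam C K)
include hg

theorem norm_apply_expDamp_le (w : ℝ →ᵇ E) {τ : ℝ} (hτ : T₀ ≤ τ) :
    ‖g (τ, expDamp lam w τ)‖ ≤ (C + K * ‖w‖) * exp (-lam * τ) :=
  calc ‖g (τ, expDamp lam w τ)‖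
        ≤ ‖g (τ, expDamp lam w τ) - g (τ, 0)‖ + ‖g (τ, 0)‖ := norm_le_norm_sub_add _ _
    _ ≤ K * ‖expDamp lam w τ‖ + C * exp (-lam * τ) := by
        gcongr
        · simpa using hg.lipschitz τ hτ (expDamp lam w τ) 0
        · exact hg.norm_zero_le τ hτ
    _ ≤ K * (‖w‖ * exp (-lam * τ)) + C * exp (-lam * τ) := by
        gcongr
        · exact hg.K_nonneg
        · exact norm_expDamp_le w τ
    _ = (C + K * ‖w‖) * exp (-lam * τ) := by ring

theorem norm_apply_expDamp_sub_le (w₁ w₂ : ℝ →ᵇ E) {τ : ℝ} (hτ : T₀ ≤ τ) :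
    ‖g (τ, expDamp lam w₁ τ) - g (τ, expDamp lam w₂ τ)‖ ≤ K * dist w₁ w₂ * exp (-lam * τ) :=
  calc _ ≤ K * ‖expDamp lam w₁ τ - expDamp lam w₂ τ‖ := hg.lipschitz τ hτ _ _
    _ ≤ K * (dist w₁ w₂ * exp (-lam * τ)) :=
        mul_le_mul_of_nonneg_left (norm_expDamp_sub_le w₁ w₂ τ) hg.K_nonneg
    _ = K * dist w₁ w₂ * exp (-lam * τ) := by ring

theorem integrableOn_apply_expDamp (w : ℝ →ᵇ E) {t : ℝ} (ht : T₀ ≤ t) :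
    IntegrableOn (fun τ => g (τ, expDamp lam w τ)) (Ici t) :=
  integrableOn_Ici_of_norm_le_mul_exp hg.lam_pos
    (hg.continuous.comp
      (continuous_id.prodMk (continuous_expDamp w.continuous))).aestronglyMeasurable
    fun _ hτ => hg.norm_apply_expDamp_le w (ht.trans hτ)

theorem continuousOn_tailIntegral_expDamp (w : ℝ →ᵇ E) :
    ContinuousOn (tailIntegral g (expDamp lam w)) (Ici T₀) :=
  continuousOn_setIntegral_Ici (hg.integrableOn_apply_expDamp w le_rfl)

theorem norm_tailIntegral_expDamp_le (w : ℝ →ᵇ E) {t : ℝ} (ht : T₀ ≤ t) :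
    ‖tailIntegral g (expDamp lam w) t‖ ≤ (C + K * ‖w‖) / lam * exp (-lam * t) :=
  norm_setIntegral_Ici_le_of_norm_le_mul_exp hg.lam_pos
    fun _ hτ => hg.norm_apply_expDamp_le w (ht.trans hτ)

theorem norm_tailIntegral_expDamp_sub_le (w₁ w₂ : ℝ →ᵇ E) {t : ℝ} (ht : T₀ ≤ t) :
    ‖tailIntegral g (expDamp lam w₁) t - tailIntegral g (expDamp lam w₂) t‖ ≤
      K * dist w₁ w₂ / lam * exp (-lam * t) := by
  rw [tailIntegral, tailIntegral, ← integral_sub (hg.integrableOn_apply_expDamp w₁ ht)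
    (hg.integrableOn_apply_expDamp w₂ ht)]
  exact norm_setIntegral_Ici_le_of_norm_le_mul_exp hg.lam_pos
    fun _ hτ => hg.norm_apply_expDamp_sub_le w₁ w₂ (ht.trans hτ)

def tailMap (w : ℝ →ᵇ E) : ℝ →ᵇ E :=
  .expWeight (hg.continuousOn_tailIntegral_expDamp w) fun _ => hg.norm_tailIntegral_expDamp_le w

theorem coe_tailMap (w : ℝ →ᵇ E) :
    ⇑(hg.tailMap w) = expWeight T₀ lam (tailIntegral g (expDamp lam w)) :=
  rfl

theorem dist_tailMap_le (w₁ w₂ : ℝ →ᵇ E) :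
    dist (hg.tailMap w₁) (hg.tailMap w₂) ≤ K / lam * dist w₁ w₂ := by
  have hKlam : 0 ≤ K / lam * dist w₁ w₂ :=
    mul_nonneg (div_nonneg hg.K_nonneg hg.lam_pos.le) dist_nonneg
  refine (BoundedContinuousFunction.dist_le hKlam).2 fun t => ?_
  rw [dist_eq_norm, coe_tailMap, coe_tailMap, ← Pi.sub_apply, ← expWeight_sub]
  refine norm_expWeight_le (fun s hs => ?_) t
  rw [← mul_div_right_comm]
  exact hg.norm_tailIntegral_expDamp_sub_le w₁ w₂ hs

theorem norm_tailMap_le (w : ℝ →ᵇ E) : ‖hg.tailMap w‖ ≤ (C + K * ‖w‖) / lam :=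
  BoundedContinuousFunction.norm_ofNormedAddCommGroup_le _
    (div_nonneg (add_nonneg hg.C_nonneg (mul_nonneg hg.K_nonneg (norm_nonneg w))) hg.lam_pos.le)
    (norm_expWeight_le fun _ => hg.norm_tailIntegral_expDamp_le w)

theorem contractingWith_tailMap (hK : K < lam) :
    ContractingWith ⟨K / lam, div_nonneg hg.K_nonneg hg.lam_pos.le⟩ hg.tailMap :=
  ⟨(div_lt_one hg.lam_pos).2 hK, LipschitzWith.of_dist_le_mul hg.dist_tailMap_le⟩

variable [CompleteSpace E] (hK : K < lam)

def fixedPoint : ℝ →ᵇ E := ContractingWith.fixedPoint hg.tailMap (hg.contractingWith_tailMap hK)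

theorem tailMap_fixedPoint : hg.tailMap (hg.fixedPoint hK) = hg.fixedPoint hK :=
  ContractingWith.fixedPoint_isFixedPt _

theorem norm_fixedPoint_le : ‖hg.fixedPoint hK‖ ≤ C / (lam - K) := by
  have h := hg.norm_tailMap_le (hg.fixedPoint hK)
  rw [hg.tailMap_fixedPoint, le_div_iff₀ hg.lam_pos] at h
  rw [le_div_iff₀ (sub_pos.2 hK)]
  linarith

def solution : ℝ → E := expDamp lam (hg.fixedPoint hK)

theorem continuous_solution : Continuous (hg.solution hK) :=
  continuous_expDamp (hg.fixedPoint hK).continuous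

theorem norm_solution_le (t : ℝ) : ‖hg.solution hK t‖ ≤ C / (lam - K) * exp (-lam * t) :=
  (norm_expDamp_le _ t).trans
    (mul_le_mul_of_nonneg_right (hg.norm_fixedPoint_le hK) (exp_pos _).le)

theorem isTailSolution_solution : IsTailSolution g T₀ (hg.solution hK) := fun t ht =>
  ⟨hg.integrableOn_apply_expDamp _ ht, by
    conv_lhs => rw [solution, ← hg.tailMap_fixedPoint, coe_tailMap, expDamp_expWeight _ ht]
    rfl⟩

theorem eqOn_solution {v : ℝ → E} {M : ℝ} (hv : ContinuousOn v (Ici T₀))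
    (hb : ∀ t ≥ T₀, ‖v t‖ ≤ M * exp (-lam * t)) (hsol : IsTailSolution g T₀ v) :
    EqOn v (hg.solution hK) (Ici T₀) := by
  set w := BoundedContinuousFunction.expWeight hv hb
  have hfix : hg.tailMap w = w := by
    ext t
    rw [coe_tailMap, BoundedContinuousFunction.coe_expWeight]
    refine congrFun (expWeight_congr fun s hs => ?_) t
    rw [(hsol s hs).2]
    exact setIntegral_congr_fun measurableSet_Ici fun τ hτ =>
      congrArg (fun a => g (τ, a)) (expDamp_expWeight v (le_trans hs hτ))
  intro t ht
  rw [← expDamp_expWeight v ht, solution, fixedPoint,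
    ← (hg.contractingWith_tailMap hK).fixedPoint_unique hfix]
  rfl

end IsExpDecayLipschitz

end

theorem fixed_point_exponential_decay_general
    {H : Type*} [NormedAddCommGroup H] [NormedSpace ℂ H] [CompleteSpace H]
    (T₀ lam C K : ℝ) (hlam : 0 < lam) (hK0 : 0 ≤ K) (hK : K ≤ lam / 2)
    (g : ℝ × H → H) (hg : Continuous g)
    (hlip : ∀ τ ≥ T₀, ∀ a b : H, ‖g (τ, a) - g (τ, b)‖ ≤ K * ‖a - b‖)
    (h0 : ∀ τ ≥ T₀, ‖g (τ, 0)‖ ≤ C * Real.exp (-lam * τ)) :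
    ∃ v : ℝ → H,
      (ContinuousOn v (Set.Ici T₀) ∧
        (∀ t ≥ T₀, ‖v t‖ ≤ (2 * C / lam) * Real.exp (-lam * t)) ∧
        (∀ t ≥ T₀, IntegrableOn (fun τ => g (τ, v τ)) (Set.Ici t) volume ∧
          v t = ∫ τ in Set.Ici t, g (τ, v τ))) ∧
      ∀ v' : ℝ → H,
        ContinuousOn v' (Set.Ici T₀) →
        (∀ t ≥ T₀, ‖v' t‖ ≤ (2 * C / lam) * Real.exp (-lam * t)) →
        (∀ t ≥ T₀, IntegrableOn (fun τ => g (τ, v' τ)) (Set.Ici t) volume ∧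
          v' t = ∫ τ in Set.Ici t, g (τ, v' τ)) →
        Set.EqOn v' v (Set.Ici T₀) := by
  have hg' : IsExpDecayLipschitz g T₀ lam C K := ⟨hlam, hK0, hg, hlip, h0⟩
  have hKlam : K < lam := by linarith
  have hbound : C / (lam - K) ≤ 2 * C / lam := by
    rw [div_le_div_iff₀ (by linarith) hlam]
    nlinarith [mul_nonneg hg'.C_nonneg (by linarith : 0 ≤ lam - 2 * K)]
  refine ⟨hg'.solution hKlam, ⟨(hg'.continuous_solution hKlam).continuousOn, fun t _ => ?_,
    hg'.isTailSolution_solution hKlam⟩, fun _ => hg'.eqOn_solution hKlam⟩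
  exact (hg'.norm_solution_le hKlam t).trans (mul_le_mul_of_nonneg_right hbound (exp_pos _).le)

theorem fixed_point_exponential_decay
    {H : Type*} [NormedAddCommGroup H] [NormedSpace ℂ H] [CompleteSpace H]
    (T₀ lam C K : ℝ) (hlam : 0 < lam) (hC : 0 < C) (hK0 : 0 ≤ K) (hK : K ≤ lam / 2)
    (g : ℝ × H → H) (hg : Continuous g)
    (hlip : ∀ τ ≥ T₀, ∀ a b : H, ‖g (τ, a) - g (τ, b)‖ ≤ K * ‖a - b‖)
    (h0 : ∀ τ ≥ T₀, ‖g (τ, 0)‖ ≤ C * Real.exp (-lam * τ)) :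
    ∃ v : ℝ → H,
      (ContinuousOn v (Set.Ici T₀) ∧
        (∀ t ≥ T₀, ‖v t‖ ≤ (2 * C / lam) * Real.exp (-lam * t)) ∧
        (∀ t ≥ T₀, IntegrableOn (fun τ => g (τ, v τ)) (Set.Ici t) volume ∧
          v t = ∫ τ in Set.Ici t, g (τ, v τ))) ∧
      ∀ v' : ℝ → H,
        ContinuousOn v' (Set.Ici T₀) →
        (∀ t ≥ T₀, ‖v' t‖ ≤ (2 * C / lam) * Real.exp (-lam * t)) →
        (∀ t ≥ T₀, IntegrableOn (fun τ => g (τ, v' τ)) (Set.Ici t) volume ∧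
          v' t = ∫ τ in Set.Ici t, g (τ, v' τ)) →
        Set.EqOn v' v (Set.Ici T₀) :=
  fixed_point_exponential_decay_general T₀ lam C K hlam hK0 hK g hg hlip h0
end

section
/- Let d ≥ 1, let g : ℝ → ℝ be continuously differentiable, let R : ℝ^d → ℂ be continuous, and let v : ℝ^d → ℂ be twice continuously differentiable with compact support. Then Re ∫_{ℝ^d} i · ( Δv(x) + g(|R(x)|²) v(x) + 2 g′(|R(x)|²) Re(R(x) · conj(v(x))) · R(x) ) · conj(v(x)) dx = −2 ∫_{ℝ^d} g′(|R(x)|²) · Re(R(x) · conj(v(x))) · Im(R(x) · conj(v(x))) dx. -/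
/-! Since `Re (i z) = -Im z`, the potential term `g(|R|²) |v|²` is real and drops out, and so
does the Laplacian term: `Im (Δv · v̄) = ∑ᵢ ∂ᵢ Im (∂ᵢv · v̄)` because `Im |∂ᵢv|² = 0`, and the
integral of a derivative of a compactly supported `C¹` function vanishes. Only the `g'` term
survives. -/

open MeasureTheory

open ComplexConjugate

section IntegralOfDerivative

variable {E G : Type*} [NormedAddCommGroup E] [NormedSpace ℝ E]
  [MeasurableSpace E] [BorelSpace E] [NormedAddCommGroup G] [NormedSpace ℝ G]
  {w : E → G}

theorem HasCompactSupport.integrable_fderiv_apply {μ : Measure E} [IsFiniteMeasureOnCompacts μ]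
    (hw : ContDiff ℝ 1 w) (hsupp : HasCompactSupport w) (u : E) :
    Integrable (fun x => fderiv ℝ w x u) μ :=
  ((hw.continuous_fderiv one_ne_zero).clm_apply continuous_const).integrable_of_hasCompactSupport
    (hsupp.fderiv_apply ℝ u)

theorem HasCompactSupport.integral_fderiv_apply_eq_zero [FiniteDimensional ℝ E] {μ : Measure E}
    [μ.IsAddHaarMeasure]
    (hw : ContDiff ℝ 1 w) (hsupp : HasCompactSupport w) (u : E) :
    ∫ x, fderiv ℝ w x u ∂μ = 0 := by
  -- integrate by parts against the constant function `1`
  have hparts := integral_smul_fderiv_eq_neg_fderiv_smul_of_integrable (μ := μ) (v := u)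
    (f := fun _ => (1 : ℝ)) (g := w) (by simp) (by simpa using hsupp.integrable_fderiv_apply hw u)
    (by simpa using hw.continuous.integrable_of_hasCompactSupport hsupp)
    (fun _ _ => differentiableAt_const _)
    (fun x _ => (hw.differentiable one_ne_zero).differentiableAt)
  simpa using hparts

end IntegralOfDerivative

theorem ContDiff.fderiv_right_apply {𝕜 E F : Type*} [NontriviallyNormedField 𝕜]
    [NormedAddCommGroup E] [NormedSpace 𝕜 E] [NormedAddCommGroup F] [NormedSpace 𝕜 F]
    {f : E → F} {m n : WithTop ℕ∞} (hf : ContDiff 𝕜 n f) (hmn : m + 1 ≤ n) (u : E) :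
    ContDiff 𝕜 m fun y => fderiv 𝕜 f y u :=
  (hf.fderiv_right hmn).clm_apply contDiff_const

theorem ContDiff.continuous_laplacian {d : ℕ} {F : Type*} [NormedAddCommGroup F]
    [NormedSpace ℝ F] {f : EuclideanSpace ℝ (Fin d) → F} (hf : ContDiff ℝ 2 f) :
    Continuous (laplacian f) :=
  continuous_finsetSum _ fun _ _ =>
    ((hf.fderiv_right_apply (m := 1) le_rfl _).continuous_fderiv one_ne_zero).clm_apply
      continuous_const

theorem fderiv_im_mul_conj_apply {E : Type*} [NormedAddCommGroup E] [NormedSpace ℝ E]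
    {u v : E → ℂ} {x : E} (hu : DifferentiableAt ℝ u x) (hv : DifferentiableAt ℝ v x) (h : E) :
    fderiv ℝ (fun y => (u y * conj (v y)).im) x h =
      (fderiv ℝ u x h * conj (v x)).im + (u x * conj (fderiv ℝ v x h)).im := by
  have hconj : HasFDerivAt (fun y => conj (v y))
      (Complex.conjCLE.toContinuousLinearMap.comp (fderiv ℝ v x)) x :=
    Complex.conjCLE.toContinuousLinearMap.hasFDerivAt.comp x hv.hasFDerivAt
  have him : HasFDerivAt (fun y => (u y * conj (v y)).im) _ x :=
    Complex.imCLM.hasFDerivAt.comp x (hu.hasFDerivAt.mul hconj)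
  rw [him.fderiv]
  simp only [ContinuousLinearMap.comp_add, add_apply,
    ContinuousLinearMap.comp_apply, smul_apply, ContinuousLinearEquiv.coe_coe,
    ContinuousAlgEquiv.coeCLE_apply, Complex.conjCAE_apply, smul_eq_mul, Complex.imCLM_apply,
    Complex.mul_im, Complex.conj_im, Complex.conj_re, mul_neg, neg_mul]
  ring

theorem im_laplacian_mul_conj {d : ℕ} {v : EuclideanSpace ℝ (Fin d) → ℂ} (hv : ContDiff ℝ 2 v)
    (x : EuclideanSpace ℝ (Fin d)) :
    (laplacian v x * conj (v x)).im = ∑ i, fderiv ℝ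
      (fun y => (fderiv ℝ v y (EuclideanSpace.single i 1) * conj (v y)).im) x
      (EuclideanSpace.single i 1) := by
  simp only [laplacian, Finset.sum_mul, Complex.im_sum]
  refine Finset.sum_congr rfl fun i _ => ?_
  rw [fderiv_im_mul_conj_apply ((hv.fderiv_right_apply (m := 1) le_rfl _).differentiable
    one_ne_zero x) ((hv.differentiable two_ne_zero) x), Complex.mul_conj, Complex.ofReal_im,
    add_zero]

theorem integral_im_laplacian_mul_conj_eq_zero {d : ℕ} {v : EuclideanSpace ℝ (Fin d) → ℂ}
    (hv : ContDiff ℝ 2 v) (hvsupp : HasCompactSupport v) :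
    ∫ x, (laplacian v x * conj (v x)).im = 0 := by
  set e : Fin d → EuclideanSpace ℝ (Fin d) := fun i => EuclideanSpace.single i 1
  have hw : ∀ i, ContDiff ℝ 1 fun y => (fderiv ℝ v y (e i) * conj (v y)).im := fun i =>
    Complex.imCLM.contDiff.comp ((hv.fderiv_right_apply (m := 1) le_rfl _).mul
      (Complex.conjCLE.contDiff.comp (hv.of_le one_le_two)))
  have hwsupp : ∀ i, HasCompactSupport fun y => (fderiv ℝ v y (e i) * conj (v y)).im :=
    fun i => ((hvsupp.comp_left (map_zero conj)).mul_left).comp_left Complex.zero_im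
  simp_rw [im_laplacian_mul_conj hv]
  rw [integral_finsetSum _ fun i _ => (hwsupp i).integrable_fderiv_apply (hw i) (e i)]
  exact Finset.sum_eq_zero fun i _ => (hwsupp i).integral_fderiv_apply_eq_zero (hw i) (e i)

theorem re_I_mul_linearized_mul_conj (L z r : ℂ) (a b : ℝ) :
    (Complex.I * (L + a * z + ((2 * b * (r * conj z).re : ℝ) : ℂ) * r) * conj z).re =
      -(L * conj z).im - 2 * (b * (r * conj z).re * (r * conj z).im) := by
  simp only [Complex.mul_re, Complex.mul_im, Complex.add_re, Complex.add_im, Complex.I_re,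
    Complex.I_im, Complex.ofReal_re, Complex.ofReal_im, Complex.conj_re, Complex.conj_im]
  ring

theorem linearized_cancellation_identity_general
    (d : ℕ)
    (g : ℝ → ℝ) (hg : ContDiff ℝ 1 g)
    (R : EuclideanSpace ℝ (Fin d) → ℂ) (hR : Continuous R)
    (v : EuclideanSpace ℝ (Fin d) → ℂ) (hv : ContDiff ℝ 2 v)
    (hvsupp : HasCompactSupport v) :
    (∫ x : EuclideanSpace ℝ (Fin d),
        Complex.I * (laplacian v x + (g (‖R x‖ ^ 2) : ℂ) * v x +
          ((2 * deriv g (‖R x‖ ^ 2) *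
            (R x * (starRingEnd ℂ) (v x)).re : ℝ) : ℂ) * R x) *
          (starRingEnd ℂ) (v x)).re =
      -2 * ∫ x : EuclideanSpace ℝ (Fin d),
        deriv g (‖R x‖ ^ 2) * (R x * (starRingEnd ℂ) (v x)).re *
          (R x * (starRingEnd ℂ) (v x)).im := by
  have hg_cont := hg.continuous
  have hg'_cont := hg.continuous_deriv le_rfl
  have hv_cont := hv.continuous
  have hlap_cont := hv.continuous_laplacian
  have hvbar : HasCompactSupport fun x => conj (v x) := hvsupp.comp_left (map_zero conj)
  have hlap : Integrable fun x => (laplacian v x * conj (v x)).im :=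
    (by fun_prop : Continuous _).integrable_of_hasCompactSupport
      (hvbar.mul_left.comp_left Complex.zero_im)
  have hnonlin : Integrable fun x => deriv g (‖R x‖ ^ 2) * (R x * conj (v x)).re *
      (R x * conj (v x)).im :=
    (by fun_prop : Continuous _).integrable_of_hasCompactSupport
      (hvbar.mul_left.comp_left Complex.zero_im).mul_left
  have hF : Integrable fun x => Complex.I * (laplacian v x + (g (‖R x‖ ^ 2) : ℂ) * v x +
      ((2 * deriv g (‖R x‖ ^ 2) * (R x * conj (v x)).re : ℝ) : ℂ) * R x) * conj (v x) :=
    (by fun_prop : Continuous _).integrable_of_hasCompactSupport hvbar.mul_left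
  rw [← RCLike.re_to_complex, ← integral_re hF]
  simp_rw [RCLike.re_to_complex, re_I_mul_linearized_mul_conj]
  rw [integral_sub hlap.fun_neg (hnonlin.const_mul 2), integral_neg, integral_const_mul,
    integral_im_laplacian_mul_conj_eq_zero hv hvsupp]
  ring

theorem linearized_cancellation_identity
    (d : ℕ) (hd : 1 ≤ d)
    (g : ℝ → ℝ) (hg : ContDiff ℝ 1 g)
    (R : EuclideanSpace ℝ (Fin d) → ℂ) (hR : Continuous R)
    (v : EuclideanSpace ℝ (Fin d) → ℂ) (hv : ContDiff ℝ 2 v)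
    (hvsupp : HasCompactSupport v) :
    (∫ x : EuclideanSpace ℝ (Fin d),
        Complex.I * (laplacian v x + (g (‖R x‖ ^ 2) : ℂ) * v x +
          ((2 * deriv g (‖R x‖ ^ 2) *
            (R x * (starRingEnd ℂ) (v x)).re : ℝ) : ℂ) * R x) *
          (starRingEnd ℂ) (v x)).re =
      -2 * ∫ x : EuclideanSpace ℝ (Fin d),
        deriv g (‖R x‖ ^ 2) * (R x * (starRingEnd ℂ) (v x)).re *
          (R x * (starRingEnd ℂ) (v x)).im :=
  linearized_cancellation_identity_general d g hg R hR v hv hvsupp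
end
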